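/- arXiv:2509.01039 — 9 statements merged into one kernel-verified Lean document; each statement's English description precedes it below -/
import Mathlib

section
/- For every integer T ≥ 1, the spectral radius of A_T satisfies the strict, horizon-independent bound ρ(A_T) < K̄ + K₁L̄/(ρ(1 − β)). -/
noncomputable section

/-- The spectral radius of a real square matrix: the maximum modulus of its
complex eigenvalues. -/
def specRad {n : ℕ} (A : Matrix (Fin n) (Fin n) ℝ) : ℝ :=
  sSup {x : ℝ | ∃ μ : ℂ, μ ∈ spectrum ℂ (A.map Complex.ofReal) ∧ x = ‖μ‖}

/-- `L̄ = L₁ / (1 - β K₁ / 2)`. -/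
def Lbar (L1 K1 β : ℝ) : ℝ := L1 / (1 - β * K1 / 2)

/-- `K̄ = 3K₁/2 + K₁ L̄ / (2 ρ (1 - β))`. -/
def Kbar (L1 K1 rho β : ℝ) : ℝ := 3 * K1 / 2 + K1 * Lbar L1 K1 β / (2 * rho * (1 - β))

/-- `K̂ = K̄ + K₁ L̄ / ρ`. -/
def Khat (L1 K1 rho β : ℝ) : ℝ := Kbar L1 K1 rho β + K1 * Lbar L1 K1 β / rho

/-- `r = K̄ β + (K₁/ρ) L₁ β`. -/
def rconst (L1 K1 rho β : ℝ) : ℝ := Kbar L1 K1 rho β * β + (K1 / rho) * L1 * β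

/-- The `T × T` matrix `A_T` (1-based indices `1 ≤ i, j ≤ T` correspond to `0`-based
`Fin T` values `i-1, j-1`): entry `K̄ + L̄K₁/ρ` if `j = i - 1`, entry `(L̄K₁/ρ) β^(j-i+1)`
if `i - 1 < j ≤ T - 1`, entry `(L₁K₁/ρ) β^(T-i+1)` if `j = T`, and `0` if `j < i - 1`. -/
def AT (L1 K1 rho β : ℝ) (T : ℕ) : Matrix (Fin T) (Fin T) ℝ :=
  fun i j =>
    if (j : ℕ) + 1 = T then (L1 * K1 / rho) * β ^ (T - (i : ℕ))
    else if (j : ℕ) + 1 = (i : ℕ) then Kbar L1 K1 rho β + Lbar L1 K1 β * K1 / rho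
    else if (i : ℕ) ≤ (j : ℕ) then (Lbar L1 K1 β * K1 / rho) * β ^ ((j : ℕ) - (i : ℕ) + 1)
    else 0

end

/-!
Every eigenvalue of a matrix is bounded in modulus by its `ℓ∞` operator norm, the largest
absolute row sum. In each row of `A_T` the subdiagonal entry is `K̂ = K̄ + L̄K₁/ρ`, and the
entries from the diagonal on (using `L₁ ≤ L̄` in the last column) are bounded by the truncated
geometric series `(L̄K₁/ρ)(β + β² + ⋯)`, which stays strictly below `(L̄K₁/ρ) β/(1-β)`.
Since `K̂ + (L̄K₁/ρ) β/(1-β) = K̄ + K₁L̄/(ρ(1-β))`, every row sum, hence `ρ(A_T)`, is below the bound.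
-/

open Finset

theorem sum_range_ite_add_one_eq_le {T a : ℕ} {X : ℝ} (hX : 0 ≤ X) :
    ∑ n ∈ range T, (if n + 1 = a then X else 0) ≤ X := by
  rw [← sum_filter, sum_const, nsmul_eq_mul]
  have hcard : #(filter (fun n => n + 1 = a) (range T)) ≤ 1 :=
    card_le_one.mpr fun m hm n hn => by simp only [mem_filter] at hm hn; omega
  exact mul_le_of_le_one_left hX (by exact_mod_cast hcard)

theorem sum_range_ite_pow_sub_add_one_lt {β : ℝ} (hβ0 : 0 < β) (hβ1 : β < 1) (T a : ℕ) :
    ∑ n ∈ range T, (if a ≤ n then β ^ (n - a + 1) else 0) < β / (1 - β) := by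
  rw [← sum_filter, range_eq_Ico, Ico_filter_le, max_eq_right (Nat.zero_le a),
    sum_Ico_eq_sum_range]
  calc ∑ k ∈ range (T - a), β ^ (a + k - a + 1) = β * ∑ k ∈ range (T - a), β ^ k := by
        rw [mul_sum]; refine sum_congr rfl fun k _ => ?_
        rw [Nat.add_sub_cancel_left, pow_succ']
    _ < β * (1 / (1 - β)) := by
        refine mul_lt_mul_of_pos_left ?_ hβ0
        rw [lt_div_iff₀ (sub_pos.mpr hβ1), geom_sum_mul_neg]
        linarith [pow_pos hβ0 (T - a)]
    _ = β / (1 - β) := mul_one_div β (1 - β)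

attribute [local instance] Matrix.linftyOpNormedRing Matrix.linftyOpNormedAlgebra
  Matrix.linfty_opNormOneClass in
theorem specRad_lt_of_forall_sum_abs_lt {n : ℕ} [Nonempty (Fin n)]
    (A : Matrix (Fin n) (Fin n) ℝ) {C : ℝ} (hA : ∀ i, ∑ j, |A i j| < C) : specRad A < C := by
  set M := A.map Complex.ofReal
  have hM : ‖M‖ < C := by
    obtain ⟨i, -, hi⟩ := exists_mem_eq_sup univ univ_nonempty fun i => ∑ j, ‖M i j‖₊
    rw [Matrix.linfty_opNorm_def, hi, NNReal.coe_sum]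
    simpa [M] using hA i
  refine lt_of_le_of_lt (Real.sSup_le ?_ (norm_nonneg M)) hM
  rintro x ⟨μ, hμ, rfl⟩
  exact spectrum.norm_le_norm_of_mem hμ

theorem le_Lbar {L1 K1 β : ℝ} (hL1 : 0 ≤ L1) (hβK0 : 0 ≤ β * K1) (hβK : β * K1 < 2) :
    L1 ≤ Lbar L1 K1 β :=
  le_div_self hL1 (by linarith) (by linarith)

theorem abs_AT_apply_le {L1 K1 rho β : ℝ} (hL1 : 0 ≤ L1) (hK1 : 0 ≤ K1) (hrho : 0 ≤ rho)
    (hβ0 : 0 ≤ β) (hβK : β * K1 < 2) (hKhat : 0 ≤ Khat L1 K1 rho β) {T : ℕ} (i j : Fin T) :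
    |AT L1 K1 rho β T i j| ≤ (if (j : ℕ) + 1 = i then Khat L1 K1 rho β else 0) +
      Lbar L1 K1 β * K1 / rho * (if (i : ℕ) ≤ j then β ^ ((j : ℕ) - i + 1) else 0) := by
  have hLbar := le_Lbar hL1 (mul_nonneg hβ0 hK1) hβK
  have hLbar0 : 0 ≤ Lbar L1 K1 β := hL1.trans hLbar
  have hi := i.isLt
  unfold AT
  split_ifs with hlast hsub hupper <;> try omega
  · rw [zero_add, abs_of_nonneg (by positivity), show (j : ℕ) - i + 1 = T - i by omega]
    gcongr
  · rw [mul_zero, add_zero, mul_comm (Lbar L1 K1 β), ← Khat, abs_of_nonneg hKhat]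
  · rw [zero_add, abs_of_nonneg (by positivity)]
  · simp

theorem sum_abs_AT_row_lt {L1 K1 rho β : ℝ} (hL1 : 0 < L1) (hK1 : 0 < K1) (hrho : 0 < rho)
    (hβ0 : 0 < β) (hβ1 : β < 1) (hβK : β * K1 < 2) {T : ℕ} (i : Fin T) :
    ∑ j, |AT L1 K1 rho β T i j| < Kbar L1 K1 rho β + K1 * Lbar L1 K1 β / (rho * (1 - β)) := by
  have h1β : 0 < 1 - β := sub_pos.mpr hβ1
  have hLbar : 0 < Lbar L1 K1 β := hL1.trans_le (le_Lbar hL1.le (by positivity) hβK)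
  have hKhat : 0 ≤ Khat L1 K1 rho β := by unfold Khat Kbar; positivity
  set c := Lbar L1 K1 β * K1 / rho
  calc ∑ j, |AT L1 K1 rho β T i j|
      ≤ ∑ n ∈ range T, ((if n + 1 = i then Khat L1 K1 rho β else 0) +
          c * (if (i : ℕ) ≤ n then β ^ (n - i + 1) else 0)) := by
        rw [← Fin.sum_univ_eq_sum_range]
        gcongr with j
        exact abs_AT_apply_le hL1.le hK1.le hrho.le hβ0.le hβK hKhat i j
    _ < Khat L1 K1 rho β + c * (β / (1 - β)) := by
        rw [sum_add_distrib, ← mul_sum]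
        exact add_lt_add_of_le_of_lt (sum_range_ite_add_one_eq_le hKhat)
          (mul_lt_mul_of_pos_left (sum_range_ite_pow_sub_add_one_lt hβ0 hβ1 T i) (by positivity))
    _ = Kbar L1 K1 rho β + K1 * Lbar L1 K1 β / (rho * (1 - β)) := by
        unfold Khat c
        field_simp
        ring

/-- Strict, horizon-independent bound: `ρ(A_T) < K̄ + K₁ L̄ / (ρ (1 - β))`. -/
theorem stmt2 (L1 K1 rho β : ℝ)
    (hL1 : 0 < L1) (hK1 : 0 < K1) (hrho : 0 < rho)
    (hβ0 : 0 < β) (hβ1 : β < 1) (hβK : β * K1 < 2)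
    (T : ℕ) (hT : 1 ≤ T) :
    specRad (AT L1 K1 rho β T)
      < Kbar L1 K1 rho β + K1 * Lbar L1 K1 β / (rho * (1 - β)) := by
  have : Nonempty (Fin T) := ⟨⟨0, hT⟩⟩
  exact specRad_lt_of_forall_sum_abs_lt _ (sum_abs_AT_row_lt hL1 hK1 hrho hβ0 hβ1 hβK)
end

section
/- Let T ≥ 2 be an integer and suppose h ∈ ℝ^T satisfies A_T h = ρ(A_T) h. Then T_{ρ(A_T)} h = ρ(A_T) h, where T_λ (for λ ∈ ℝ) is the T×T real matrix that is tridiagonal with every diagonal entry equal to −K̄β, every subdiagonal entry equal to K̂, every superdiagonal entry equal to λβ, except that its (T,T) entry is −K̄β + r. -/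
noncomputable section

/-- The `T × T` tridiagonal matrix `T_λ`: every diagonal entry `-K̄β`, every subdiagonal
entry `K̂`, every superdiagonal entry `λβ`, except that the `(T,T)` entry is `-K̄β + r`. -/
def TT (L1 K1 rho β lam : ℝ) (T : ℕ) : Matrix (Fin T) (Fin T) ℝ :=
  fun i j =>
    if (j : ℕ) = (i : ℕ) + 1 then lam * β
    else if (i : ℕ) = (j : ℕ) + 1 then Khat L1 K1 rho β
    else if (i : ℕ) = (j : ℕ) then
      (if (i : ℕ) + 1 = T then -(Kbar L1 K1 rho β * β) + rconst L1 K1 rho β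
       else -(Kbar L1 K1 rho β * β))
    else 0

end

/-!
Let `S` be the shift `(S v)ᵢ = vᵢ₊₁`, with `(S v)_T = 0`. Then `T_λ = (1 - βS) A_T + λβ S`:
row `i < T` of `T_λ` is row `i` of `A_T` minus `β` times row `i + 1`, which telescopes the
geometric entries, plus `λβ` on the superdiagonal, and the last row of `T_λ` is that of `A_T`.
Hence `A_T h = λ h` gives `T_λ h = (1 - βS)(λ h) + λβ S h = λ h`.
-/

namespace Matrix

def shiftUp (R : Type*) [Zero R] [One R] (n : ℕ) : Matrix (Fin n) (Fin n) R :=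
  of fun i j => if (j : ℕ) = i + 1 then 1 else 0

theorem shiftUp_mul_apply {R : Type*} [NonAssocSemiring R] {n : ℕ}
    (M : Matrix (Fin n) (Fin n) R) (i j : Fin n) :
    (shiftUp R n * M) i j = if h : (i : ℕ) + 1 < n then M ⟨i + 1, h⟩ j else 0 := by
  rw [mul_apply]
  split_ifs with h
  · rw [Finset.sum_eq_single ⟨i + 1, h⟩]
    · simp [shiftUp]
    · intro k _ hk
      simp only [shiftUp, of_apply, ite_mul, one_mul, zero_mul, ite_eq_right_iff]
      exact fun hki => absurd (Fin.ext hki) hk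
    · simp
  · refine Finset.sum_eq_zero fun k _ => ?_
    simp only [shiftUp, of_apply, ite_mul, one_mul, zero_mul, ite_eq_right_iff]
    omega

end Matrix

open Matrix

theorem TT_eq_one_sub_smul_shiftUp_mul_add (L1 K1 rho β lam : ℝ) (T : ℕ) :
    TT L1 K1 rho β lam T
      = (1 - β • shiftUp ℝ T) * AT L1 K1 rho β T + (lam * β) • shiftUp ℝ T := by
  ext i j
  rw [sub_mul, one_mul, smul_mul_assoc, Matrix.add_apply, Matrix.sub_apply, Matrix.smul_apply,
    Matrix.smul_apply, shiftUp_mul_apply]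
  simp only [smul_eq_mul, shiftUp, of_apply, TT, AT, Khat, rconst]
  split_ifs <;> first
    | omega
    | ring1
    | (rw [show T - (i : ℕ) = 1 by omega]; ring1)
    | (rw [show T - (i : ℕ) = T - (i + 1) + 1 by omega]; ring1)
    | (rw [show (j : ℕ) - i + 1 = 1 by omega]; ring1)
    | (rw [show (j : ℕ) - i + 1 = j - (i + 1) + 1 + 1 by omega]; ring1)

theorem stmt4_general (L1 K1 rho β : ℝ)
    (T : ℕ)
    (h : Fin T → ℝ)
    (hh : (AT L1 K1 rho β T).mulVec h = specRad (AT L1 K1 rho β T) • h) :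
    (TT L1 K1 rho β (specRad (AT L1 K1 rho β T)) T).mulVec h
      = specRad (AT L1 K1 rho β T) • h := by
  set lam := specRad (AT L1 K1 rho β T)
  calc (TT L1 K1 rho β lam T).mulVec h
      = (1 - β • shiftUp ℝ T) *ᵥ (AT L1 K1 rho β T *ᵥ h) + (lam * β) • (shiftUp ℝ T *ᵥ h) := by
        rw [TT_eq_one_sub_smul_shiftUp_mul_add, add_mulVec, ← mulVec_mulVec, smul_mulVec]
    _ = lam • h := by
        rw [hh, sub_mulVec, one_mulVec, mulVec_smul, smul_mulVec]
        module

/-- If `A_T h = ρ(A_T) h` then `T_{ρ(A_T)} h = ρ(A_T) h`. -/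
theorem stmt4 (L1 K1 rho β : ℝ)
    (hL1 : 0 < L1) (hK1 : 0 < K1) (hrho : 0 < rho)
    (hβ0 : 0 < β) (hβ1 : β < 1) (hβK : β * K1 < 2)
    (T : ℕ) (hT : 2 ≤ T)
    (h : Fin T → ℝ)
    (hh : (AT L1 K1 rho β T).mulVec h = specRad (AT L1 K1 rho β T) • h) :
    (TT L1 K1 rho β (specRad (AT L1 K1 rho β T)) T).mulVec h
      = specRad (AT L1 K1 rho β T) • h :=
  stmt4_general L1 K1 rho β T h hh
end

section
/- Let T ≥ 2 be an integer such that K̂·cos²(π/(T+1)) − K̄ > 0. Then at least one of the following two inequalities holds: either √(K̂β)·cos(π/(T+1)) + √((K̂·cos²(π/(T+1)) − K̄)·β) ≤ √(ρ(A_T)), or √(ρ(A_T)) ≤ √(K̂β)·cos(π/(T+1)) − √((K̂·cos²(π/(T+1)) − K̄)·β). -/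
/-!
Only the first alternative is ever needed: `s := √(K̂β) cos θ + √((K̂ cos² θ - K̄) β)`, with
`θ = π/(T+1)`, is a root of `X² - 2√(K̂β) cos θ X + K̄β`, and this makes
`w k = q ^ k sin (k θ)`, `q = √(K̂β)/(βs)`, a solution of the three-term recurrence
`βs² w (k+2) + K̂ w k = (s² + βK̄) w (k+1)` with `w 0 = w (T+1) = 0`, positive on `1, …, T`.
Telescoping the recurrence along a row of `A_T` (whose entries above the subdiagonal decay
geometrically in `β`) gives `s² w ≤ A_T w` entrywise, and for a nonnegative matrix this forces
`s² ≤ ρ(A_T)` (Collatz–Wielandt), which we derive from Gelfand's formula.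
-/

open Filter Finset Matrix Topology

theorem ofReal_le_spectralRadius_of_mul_pow_le_norm_pow {A : Type*} [NormedRing A]
    [NormedAlgebra ℂ A] [CompleteSpace A] (a : A) {c r : ℝ} (hc : 0 < c) (hr : 0 ≤ r)
    (h : ∀ n : ℕ, c * r ^ n ≤ ‖a ^ n‖) : ENNReal.ofReal r ≤ spectralRadius ℂ a := by
  have hlow : Tendsto (fun n : ℕ => ENNReal.ofReal (c ^ (1 / (n : ℝ)) * r)) atTop
      (𝓝 (ENNReal.ofReal r)) := by
    have hc1 : Tendsto (fun n : ℕ => c ^ (1 / (n : ℝ))) atTop (𝓝 1) := by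
      have := (Real.continuousAt_const_rpow hc.ne').tendsto.comp
        tendsto_one_div_atTop_nhds_zero_nat
      rwa [Real.rpow_zero] at this
    simpa using ENNReal.tendsto_ofReal (hc1.mul_const r)
  refine le_of_tendsto_of_tendsto hlow
    (spectrum.pow_norm_pow_one_div_tendsto_nhds_spectralRadius a) ?_
  filter_upwards [eventually_ne_atTop 0] with n hn
  gcongr
  calc c ^ (1 / (n : ℝ)) * r = (c * r ^ n) ^ (1 / (n : ℝ)) := by
        rw [Real.mul_rpow hc.le (by positivity), one_div, Real.pow_rpow_inv_natCast hr hn]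
    _ ≤ ‖a ^ n‖ ^ (1 / (n : ℝ)) := by gcongr; exact h n

section LinftyOpNorm

attribute [local instance] Matrix.linftyOpNormedAddCommGroup Matrix.linftyOpNormedRing
  Matrix.linftyOpNormedAlgebra

theorem le_specRad_of_ofReal_le_spectralRadius {n : ℕ} (A : Matrix (Fin n) (Fin n) ℝ) {r : ℝ}
    (h : ENNReal.ofReal r ≤ spectralRadius ℂ (A.map Complex.ofReal)) : r ≤ specRad A := by
  rcases (spectrum ℂ (A.map Complex.ofReal)).eq_empty_or_nonempty with hempty | hne
  · simp [spectralRadius, hempty] at h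
    simpa [specRad, hempty] using h
  · obtain ⟨z, hz, hzr⟩ := spectrum.exists_nnnorm_eq_spectralRadius_of_nonempty hne
    have hbdd : BddAbove {x : ℝ | ∃ μ ∈ spectrum ℂ (A.map Complex.ofReal), x = ‖μ‖} := by
      obtain ⟨M, hM⟩ :=
        ((spectrum.isCompact (A.map Complex.ofReal)).image (continuous_norm (E := ℂ))).bddAbove
      exact ⟨M, fun x ⟨μ, hμ, hx⟩ => hx ▸ hM ⟨μ, hμ, rfl⟩⟩
    calc r ≤ ‖z‖ := by
          rw [← hzr, ← enorm_eq_nnnorm, ← ofReal_norm] at h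
          exact (ENNReal.ofReal_le_ofReal_iff (norm_nonneg z)).1 h
      _ ≤ specRad A := le_csSup hbdd ⟨z, hz, rfl⟩

theorem Matrix.norm_map_ofReal {ι : Type*} [Fintype ι] (A : Matrix ι ι ℝ) :
    ‖A.map Complex.ofReal‖ = ‖A‖ := by
  simp [Matrix.linfty_opNorm_def]

theorem Matrix.mulVec_mono_of_nonneg {ι : Type*} [Fintype ι] {A : Matrix ι ι ℝ}
    (hA : ∀ i j, 0 ≤ A i j) {u v : ι → ℝ} (h : u ≤ v) : A *ᵥ u ≤ A *ᵥ v := fun i =>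
  Finset.sum_le_sum fun j _ => mul_le_mul_of_nonneg_left (h j) (hA i j)

theorem Matrix.ofReal_le_spectralRadius_of_smul_le_mulVec {ι : Type*} [Fintype ι]
    [DecidableEq ι] {A : Matrix ι ι ℝ} (hA : ∀ i j, 0 ≤ A i j) {v : ι → ℝ} (hv : 0 ≤ v)
    (hv0 : v ≠ 0) {r : ℝ} (hr : 0 ≤ r) (h : r • v ≤ A *ᵥ v) :
    ENNReal.ofReal r ≤ spectralRadius ℂ (A.map Complex.ofReal) := by
  have hpow : ∀ k : ℕ, r ^ k • v ≤ (A ^ k) *ᵥ v := by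
    intro k
    induction k with
    | zero => simp
    | succ k ih =>
      calc r ^ (k + 1) • v = r ^ k • (r • v) := by rw [pow_succ, mul_smul]
        _ ≤ r ^ k • (A *ᵥ v) := smul_le_smul_of_nonneg_left h (by positivity)
        _ = A *ᵥ (r ^ k • v) := (Matrix.mulVec_smul A _ v).symm
        _ ≤ A *ᵥ ((A ^ k) *ᵥ v) := Matrix.mulVec_mono_of_nonneg hA ih
        _ = (A ^ (k + 1)) *ᵥ v := by rw [Matrix.mulVec_mulVec, pow_succ']
  obtain ⟨i, hi⟩ : ∃ i, v i ≠ 0 := Function.ne_iff.1 hv0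
  have hvi : 0 < v i := (hv i).lt_of_ne' hi
  have hvnorm : 0 < ‖v‖ := norm_pos_iff.2 hv0
  refine ofReal_le_spectralRadius_of_mul_pow_le_norm_pow _ (div_pos hvi hvnorm) hr fun k => ?_
  rw [show A.map Complex.ofReal ^ k = (A ^ k).map Complex.ofReal from
    (Matrix.map_pow A Complex.ofRealHom k).symm, Matrix.norm_map_ofReal, div_mul_eq_mul_div,
    div_le_iff₀ hvnorm]
  calc v i * r ^ k = (r ^ k • v) i := by simp [mul_comm]
    _ ≤ ((A ^ k) *ᵥ v) i := hpow k i
    _ ≤ ‖(A ^ k) *ᵥ v‖ := (Real.le_norm_self _).trans (norm_le_pi_norm _ i)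
    _ ≤ ‖A ^ k‖ * ‖v‖ := Matrix.linfty_opNorm_mulVec _ _

end LinftyOpNorm

section Recurrence

variable {β lam Kb g : ℝ} {w : ℕ → ℝ}

theorem residual_eq_sum_add
    (hrec : ∀ k, β * lam * w (k + 2) + (Kb + g) * w k = (lam + β * Kb) * w (k + 1))
    (n i : ℕ) :
    lam * w (i + 1) - (Kb + g) * w i
      = g * ∑ d ∈ range n, β ^ (d + 1) * w (i + d + 1)
        + β ^ n * (lam * w (i + n + 1) - (Kb + g) * w (i + n)) := by
  induction n with
  | zero => simp
  | succ n ih =>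
    rw [sum_range_succ, ih, show i + (n + 1) = i + n + 1 by omega]
    linear_combination -β ^ n * hrec (i + n)

theorem mul_le_of_recurrence {c : ℝ} {T i : ℕ} (hβ : 0 ≤ β) (hKb : 0 ≤ Kb) (hc : 0 ≤ c)
    (hwT : 0 ≤ w T) (hwT1 : w (T + 1) = 0)
    (hrec : ∀ k, β * lam * w (k + 2) + (Kb + g) * w k = (lam + β * Kb) * w (k + 1))
    (hi : i < T) :
    lam * w (i + 1) ≤ (Kb + g) * w i + g * ∑ d ∈ range (T - 1 - i), β ^ (d + 1) * w (i + d + 1)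
      + c * β ^ (T - i) * w T := by
  obtain ⟨n, rfl⟩ : ∃ n, T = i + n + 1 := ⟨T - 1 - i, by omega⟩
  have hlast : lam * w (i + n + 1) - (Kb + g) * w (i + n) = -(β * Kb * w (i + n + 1)) := by
    linear_combination -hrec (i + n) + β * lam * hwT1
  rw [show i + n + 1 - 1 - i = n by omega, show i + n + 1 - i = n + 1 by omega]
  have hres := residual_eq_sum_add hrec n i
  rw [hlast] at hres
  have : 0 ≤ β ^ n * (β * Kb * w (i + n + 1)) + c * β ^ (n + 1) * w (i + n + 1) := by positivity
  linarith

end Recurrence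

noncomputable def sinSeq (q θ : ℝ) (k : ℕ) : ℝ := q ^ k * Real.sin (k * θ)

section sinSeq

variable {q θ : ℝ}

@[simp]
theorem sinSeq_zero : sinSeq q θ 0 = 0 := by simp [sinSeq]

theorem sinSeq_add_two (k : ℕ) :
    sinSeq q θ (k + 2) = 2 * q * Real.cos θ * sinSeq q θ (k + 1) - q ^ 2 * sinSeq q θ k := by
  have h2 : ((k + 2 : ℕ) : ℝ) * θ = (k + 1 : ℕ) * θ + θ := by push_cast; ring
  have h0 : (k : ℝ) * θ = (k + 1 : ℕ) * θ - θ := by push_cast; ring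
  rw [sinSeq, sinSeq, sinSeq, h2, h0, Real.sin_add, Real.sin_sub]
  ring

theorem sinSeq_recurrence_of_root {β s p Kb Kh : ℝ} (hβ : β ≠ 0) (hs : s ≠ 0)
    (hp : p ^ 2 = Kh * β) (hroot : s ^ 2 + β * Kb = 2 * p * Real.cos θ * s) (k : ℕ) :
    β * s ^ 2 * sinSeq (p / (β * s)) θ (k + 2) + Kh * sinSeq (p / (β * s)) θ k
      = (s ^ 2 + β * Kb) * sinSeq (p / (β * s)) θ (k + 1) := by
  have hq2 : β * s ^ 2 * (p / (β * s)) ^ 2 = Kh := by field_simp; linear_combination hp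
  have hq1 : β * s ^ 2 * (2 * (p / (β * s)) * Real.cos θ) = s ^ 2 + β * Kb := by
    rw [hroot]; field_simp
  rw [sinSeq_add_two]
  linear_combination sinSeq (p / (β * s)) θ (k + 1) * hq1 - sinSeq (p / (β * s)) θ k * hq2

theorem sinSeq_pos_of_le {T k : ℕ} (hq : 0 < q) (hk1 : 1 ≤ k) (hkT : k ≤ T) :
    0 < sinSeq q (Real.pi / (T + 1)) k := by
  have hk0 : (0 : ℝ) < k := by exact_mod_cast hk1
  have hkT' : (k : ℝ) < T + 1 := by exact_mod_cast Nat.lt_succ_of_le hkT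
  refine mul_pos (pow_pos hq k) (Real.sin_pos_of_pos_of_lt_pi (by positivity) ?_)
  calc k * (Real.pi / (T + 1)) = Real.pi * (k / (T + 1)) := by ring
    _ < Real.pi * 1 := by gcongr; exact (div_lt_one (by positivity)).2 hkT'
    _ = Real.pi := mul_one _

theorem sinSeq_succ_self (T : ℕ) : sinSeq q (Real.pi / (T + 1)) (T + 1) = 0 := by
  rw [sinSeq, Nat.cast_add_one, mul_div_cancel₀ _ (by positivity), Real.sin_pi, mul_zero]

end sinSeq

theorem cos_pi_div_succ_pos {T : ℕ} (hT : 2 ≤ T) : 0 < Real.cos (Real.pi / (T + 1)) := by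
  have hT' : (3 : ℝ) ≤ T + 1 := by norm_cast; omega
  have : Real.pi / (T + 1) ≤ Real.pi / 3 := by gcongr
  have : 0 < Real.pi / (T + 1) := by positivity
  exact Real.cos_pos_of_mem_Ioo ⟨by linarith [Real.pi_pos], by linarith [Real.pi_pos]⟩

theorem Khat_eq (L1 K1 rho β : ℝ) :
    Khat L1 K1 rho β = Kbar L1 K1 rho β + Lbar L1 K1 β * K1 / rho := by
  unfold Khat; ring

theorem Lbar_pos {L1 K1 β : ℝ} (hL1 : 0 < L1) (hβK : β * K1 < 2) : 0 < Lbar L1 K1 β :=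
  div_pos hL1 (by linarith)

theorem Kbar_pos {L1 K1 rho β : ℝ} (hK1 : 0 < K1) (hrho : 0 < rho) (hβ1 : β < 1)
    (hLbar : 0 < Lbar L1 K1 β) : 0 < Kbar L1 K1 rho β := by
  have : 0 < 1 - β := sub_pos.2 hβ1
  unfold Kbar
  positivity

theorem AT_nonneg {L1 K1 rho β : ℝ} (T : ℕ) (hL1 : 0 ≤ L1) (hK1 : 0 ≤ K1) (hrho : 0 ≤ rho)
    (hβ : 0 ≤ β) (hLbar : 0 ≤ Lbar L1 K1 β) (hKbar : 0 ≤ Kbar L1 K1 rho β) (i j : Fin T) :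
    0 ≤ AT L1 K1 rho β T i j := by
  have hg : 0 ≤ Lbar L1 K1 β * K1 / rho := by positivity
  unfold AT
  split_ifs
  · positivity
  · exact add_nonneg hKbar hg
  · positivity
  · exact le_rfl

theorem AT_mulVec_apply (L1 K1 rho β : ℝ) {T : ℕ} {w : ℕ → ℝ} (hw0 : w 0 = 0) (i : Fin T) :
    (AT L1 K1 rho β T *ᵥ fun j => w (j + 1)) i
      = (Kbar L1 K1 rho β + Lbar L1 K1 β * K1 / rho) * w i
        + Lbar L1 K1 β * K1 / rho * ∑ d ∈ range (T - 1 - i), β ^ (d + 1) * w (i + d + 1)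
        + L1 * K1 / rho * β ^ (T - i) * w T := by
  obtain ⟨t, rfl⟩ : ∃ t, T = t + 1 := ⟨T - 1, by have := i.isLt; omega⟩
  set K := Kbar L1 K1 rho β + Lbar L1 K1 β * K1 / rho
  set g := Lbar L1 K1 β * K1 / rho
  have hx : ∀ x : Fin t, (x : ℕ) ≠ t := fun x => x.isLt.ne
  rw [mulVec, dotProduct, Fin.sum_univ_castSucc]
  simp only [AT, Fin.val_castSucc, Fin.val_last, add_left_inj, if_true, hx, if_false]
  rw [Fin.sum_univ_eq_sum_range
      (fun j => (if j + 1 = (i : ℕ) then K else if (i : ℕ) ≤ j then g * β ^ (j - i + 1) else 0)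
        * w (j + 1)) t,
    ← sum_range_add_sum_Ico _ (Nat.lt_succ_iff.1 i.isLt), sum_Ico_eq_sum_range,
    show t + 1 - 1 - (i : ℕ) = t - i by omega, mul_sum]
  congr 1
  · rcases (i : ℕ) with _ | k
    · simp [hw0]
    · rw [sum_range_succ, if_pos rfl, sum_eq_zero fun j hj => by
        have := mem_range.1 hj
        rw [if_neg (by omega), if_neg (by omega), zero_mul], zero_add]
  · refine sum_congr rfl fun d _ => ?_
    rw [if_neg (by omega), if_pos (by omega), show (i : ℕ) + d - i + 1 = d + 1 by omega]
    ring

theorem le_specRad_AT {L1 K1 rho β lam : ℝ} {T : ℕ} {w : ℕ → ℝ} (hL1 : 0 ≤ L1) (hK1 : 0 ≤ K1)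
    (hrho : 0 ≤ rho) (hβ : 0 ≤ β) (hLbar : 0 ≤ Lbar L1 K1 β) (hKbar : 0 ≤ Kbar L1 K1 rho β)
    (hlam : 0 ≤ lam) (hT : 0 < T) (hw0 : w 0 = 0) (hwT : w (T + 1) = 0)
    (hw : ∀ k, 1 ≤ k → k ≤ T → 0 < w k)
    (hrec : ∀ k, β * lam * w (k + 2) + (Kbar L1 K1 rho β + Lbar L1 K1 β * K1 / rho) * w k
      = (lam + β * Kbar L1 K1 rho β) * w (k + 1)) :
    lam ≤ specRad (AT L1 K1 rho β T) := by
  have hrow : lam • (fun j : Fin T => w (j + 1)) ≤ AT L1 K1 rho β T *ᵥ fun j => w (j + 1) :=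
    fun i => by
      rw [Pi.smul_apply, smul_eq_mul, AT_mulVec_apply _ _ _ _ hw0]
      exact mul_le_of_recurrence hβ hKbar (by positivity) (hw T hT le_rfl).le hwT hrec i.isLt
  refine le_specRad_of_ofReal_le_spectralRadius _ <|
    Matrix.ofReal_le_spectralRadius_of_smul_le_mulVec (AT_nonneg T hL1 hK1 hrho hβ hLbar hKbar)
      (fun j => (hw _ (by omega) j.isLt).le) (fun h => ?_) hlam hrow
  exact (hw 1 le_rfl hT).ne' (congrFun h ⟨0, hT⟩)

/-- Quadratic-formula dichotomy for `√(ρ(A_T))` (Proposition 3.7). -/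
theorem stmt6 (L1 K1 rho β : ℝ)
    (hL1 : 0 < L1) (hK1 : 0 < K1) (hrho : 0 < rho)
    (hβ0 : 0 < β) (hβ1 : β < 1) (hβK : β * K1 < 2)
    (T : ℕ) (hT : 2 ≤ T)
    (hcos : 0 < Khat L1 K1 rho β * (Real.cos (Real.pi / ((T : ℝ) + 1))) ^ 2
        - Kbar L1 K1 rho β) :
    Real.sqrt (Khat L1 K1 rho β * β) * Real.cos (Real.pi / ((T : ℝ) + 1))
        + Real.sqrt ((Khat L1 K1 rho β * (Real.cos (Real.pi / ((T : ℝ) + 1))) ^ 2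
            - Kbar L1 K1 rho β) * β)
      ≤ Real.sqrt (specRad (AT L1 K1 rho β T))
    ∨ Real.sqrt (specRad (AT L1 K1 rho β T))
      ≤ Real.sqrt (Khat L1 K1 rho β * β) * Real.cos (Real.pi / ((T : ℝ) + 1))
        - Real.sqrt ((Khat L1 K1 rho β * (Real.cos (Real.pi / ((T : ℝ) + 1))) ^ 2
            - Kbar L1 K1 rho β) * β) := by
  set c := Real.cos (Real.pi / ((T : ℝ) + 1))
  have hLbar := Lbar_pos hL1 hβK
  have hKbar := Kbar_pos hK1 hrho hβ1 hLbar
  have hKhatβ : 0 < Khat L1 K1 rho β * β := by rw [Khat_eq]; positivity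
  set p := Real.sqrt (Khat L1 K1 rho β * β)
  have hp : p ^ 2 = Khat L1 K1 rho β * β := Real.sq_sqrt hKhatβ.le
  set b := Real.sqrt ((Khat L1 K1 rho β * c ^ 2 - Kbar L1 K1 rho β) * β)
  have hb : b ^ 2 = (Khat L1 K1 rho β * c ^ 2 - Kbar L1 K1 rho β) * β :=
    Real.sq_sqrt (mul_pos hcos hβ0).le
  set s := p * c + b
  have hs : 0 < s :=
    add_pos_of_pos_of_nonneg (mul_pos (Real.sqrt_pos.2 hKhatβ) (cos_pi_div_succ_pos hT))
      (Real.sqrt_nonneg _)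
  have hroot : s ^ 2 + β * Kbar L1 K1 rho β = 2 * p * c * s := by
    linear_combination hb - c ^ 2 * hp
  have hq : 0 < p / (β * s) := by positivity
  have hspec : s ^ 2 ≤ specRad (AT L1 K1 rho β T) :=
    le_specRad_AT hL1.le hK1.le hrho.le hβ0.le hLbar.le hKbar.le (sq_nonneg s) (by omega)
      sinSeq_zero (sinSeq_succ_self T) (fun k hk1 hkT => sinSeq_pos_of_le hq hk1 hkT)
      fun k => by rw [← Khat_eq]; exact sinSeq_recurrence_of_root hβ0.ne' hs.ne' hp hroot k
  left
  calc s = Real.sqrt (s ^ 2) := (Real.sqrt_sq hs.le).symm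
    _ ≤ _ := Real.sqrt_le_sqrt hspec
end

section
/- Let T ≥ 1 be an integer and let j be a real number with 0 < j ≤ 1. Then every complex root of the polynomial p(z) = z^{2T+2} − j·z^{2T+1} + j·z − 1 lies on the unit circle, i.e. every z ∈ ℂ with p(z) = 0 satisfies |z| = 1. -/
/-!
A root of `p` satisfies `z ^ (2T+1) * (z - j) = 1 - j z`. The Blaschke factor `(z - a) / (1 - ā z)`
(`‖a‖ ≤ 1`) has modulus at most `1` inside the unit disk and at least `1` outside it, whereas
`‖z‖ ^ (2T+1)` is `< 1` inside and `> 1` outside; so the equation can only hold on the unit circle.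
-/

open ComplexConjugate

theorem Complex.norm_one_sub_conj_mul_sq_sub_norm_sub_sq (a z : ℂ) :
    ‖1 - conj a * z‖ ^ 2 - ‖z - a‖ ^ 2 = (1 - ‖a‖ ^ 2) * (1 - ‖z‖ ^ 2) := by
  simp only [Complex.sq_norm, Complex.normSq_apply, Complex.sub_re, Complex.sub_im,
    Complex.mul_re, Complex.mul_im, Complex.conj_re, Complex.conj_im, Complex.one_re,
    Complex.one_im]
  ring

theorem Complex.norm_sub_le_norm_one_sub_conj_mul {a z : ℂ} (ha : ‖a‖ ≤ 1) (hz : ‖z‖ ≤ 1) :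
    ‖z - a‖ ≤ ‖1 - conj a * z‖ := by
  have hdiff := norm_one_sub_conj_mul_sq_sub_norm_sub_sq a z
  refine (sq_le_sq₀ (norm_nonneg _) (norm_nonneg _)).mp ?_
  have ha2 : ‖a‖ ^ 2 ≤ 1 := pow_le_one₀ (norm_nonneg a) ha
  have hz2 : ‖z‖ ^ 2 ≤ 1 := pow_le_one₀ (norm_nonneg z) hz
  nlinarith [mul_nonneg (sub_nonneg.mpr ha2) (sub_nonneg.mpr hz2)]

theorem Complex.norm_one_sub_conj_mul_le_norm_sub {a z : ℂ} (ha : ‖a‖ ≤ 1) (hz : 1 ≤ ‖z‖) :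
    ‖1 - conj a * z‖ ≤ ‖z - a‖ := by
  have hdiff := norm_one_sub_conj_mul_sq_sub_norm_sub_sq a z
  refine (sq_le_sq₀ (norm_nonneg _) (norm_nonneg _)).mp ?_
  have ha2 : ‖a‖ ^ 2 ≤ 1 := pow_le_one₀ (norm_nonneg a) ha
  have hz2 : 1 ≤ ‖z‖ ^ 2 := one_le_pow₀ hz
  nlinarith [mul_nonneg (sub_nonneg.mpr ha2) (sub_nonneg.mpr hz2)]

theorem Complex.norm_eq_one_of_pow_mul_sub_eq {n : ℕ} (hn : n ≠ 0) {a z : ℂ} (ha : ‖a‖ ≤ 1)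
    (h : z ^ n * (z - a) = 1 - conj a * z) : ‖z‖ = 1 := by
  have hnorm : ‖z‖ ^ n * ‖z - a‖ = ‖1 - conj a * z‖ := by
    rw [← norm_pow, ← norm_mul, h]
  rcases lt_trichotomy ‖z‖ 1 with hlt | heq | hgt
  · have hB : 0 < ‖1 - conj a * z‖ := by
      refine norm_pos_iff.mpr (sub_ne_zero.mpr fun h1 => ?_)
      have : ‖conj a * z‖ < 1 := by
        rw [norm_mul, Complex.norm_conj]
        exact mul_lt_one_of_nonneg_of_lt_one_right ha (norm_nonneg z) hlt
      rw [← h1, norm_one] at this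
      exact this.false
    have hpow : ‖z‖ ^ n < 1 := pow_lt_one₀ (norm_nonneg z) hlt hn
    have hAB := norm_sub_le_norm_one_sub_conj_mul ha hlt.le
    nlinarith [mul_le_mul_of_nonneg_left hAB (pow_nonneg (norm_nonneg z) n)]
  · exact heq
  · have hA : 0 < ‖z - a‖ := by
      refine norm_pos_iff.mpr (sub_ne_zero.mpr fun h1 => ?_)
      rw [h1] at hgt
      exact (ha.trans_lt hgt).false
    have hpow : 1 < ‖z‖ ^ n := one_lt_pow₀ hgt hn
    have hBA := norm_one_sub_conj_mul_le_norm_sub ha hgt.le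
    nlinarith

theorem stmt8_general (T : ℕ) (j : ℝ) (hj0 : 0 < j) (hj1 : j ≤ 1)
    (z : ℂ)
    (hz : z ^ (2 * T + 2) - (j : ℂ) * z ^ (2 * T + 1) + (j : ℂ) * z - 1 = 0) :
    ‖z‖ = 1 := by
  have hroot : z ^ (2 * T + 1) * (z - j) = 1 - conj (j : ℂ) * z := by
    rw [Complex.conj_ofReal]
    linear_combination hz
  have hj : ‖(j : ℂ)‖ ≤ 1 := by
    rw [Complex.norm_real, Real.norm_of_nonneg hj0.le]
    exact hj1
  exact Complex.norm_eq_one_of_pow_mul_sub_eq (by omega) hj hroot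

/-- Root localization: for `0 < j ≤ 1`, every complex root of
`p(z) = z^{2T+2} - j z^{2T+1} + j z - 1` lies on the unit circle. -/
theorem stmt8 (T : ℕ) (hT : 1 ≤ T) (j : ℝ) (hj0 : 0 < j) (hj1 : j ≤ 1)
    (z : ℂ)
    (hz : z ^ (2 * T + 2) - (j : ℂ) * z ^ (2 * T + 1) + (j : ℂ) * z - 1 = 0) :
    ‖z‖ = 1 :=
  stmt8_general T j hj0 hj1 z hz
end

section
/- There exists an integer T₀ such that for every integer T ≥ T₀: √(K̂β)·cos(π/(T+1)) + √((K̂·cos²(π/(T+1)) − K̄)·β) ≤ √(ρ(A_T)) ≤ √(K̂β)·cos(π/(2T+1)) + √((K̂·cos²(π/(2T+1)) − K̄)·β). Consequently, writing ρ(A_T) = −K̄β + 2√(ρ(A_T)·β·K̂)·cos(θ_T) with θ_T ∈ (0, π), one has cos(π/(T+1)) ≤ cos(θ_T) ≤ cos(π/(2T+1)) for all sufficiently large T. -/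
/-!
`A_T` is entrywise nonnegative, so `ρ(A_T)` lies between `λ` and `λ'` as soon as a positive
vector `w` satisfies `λ w ≤ A_T w`, resp. `A_T w ≤ λ' w` (Collatz–Wielandt; the lower bound goes
through Gelfand's formula). Row `i` of `A_T` minus `β` times row `i + 1` has only two nonzero
entries, so for `w_j = u_{j+1}` the defect `A_T w - λ w` is a geometric progression in the row
index as soon as `u` solves `β λ u_{n+2} - (λ + β K̄) u_{n+1} + K̂ u_n = 0`. Writing `λ = s²` with
`s² + K̄β = 2 s √(K̂β) cos θ`, the sequence `u_n = r^n sin (nθ)` with `r = √(K̂β) / (βs)` is such a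
solution, positive while `nθ < π`, and the sign of the defect is decided by the last row. For `θ = π/(T+1)` it is
nonnegative because `u_{T+1} = 0`; for `θ = π/(2T+1)` it is nonpositive once
`K̂ cos² θ ≥ K̄ + L₁K₁/ρ`, which holds for large `T` because `L₁ < L̄`. Finally
`cos θ_T = (ρ + K̄β) / (2 √(ρβK̂))` increases with `√ρ` in the relevant range, so the bounds on
`√ρ(A_T)` become bounds on `cos θ_T`.
-/

open Real Matrix Filter Topology
open scoped ENNReal

section CollatzWielandt

variable {ι : Type*} [Fintype ι]

lemma norm_le_of_mulVec_le (A : Matrix ι ι ℝ) (hA : ∀ i j, 0 ≤ A i j) {w : ι → ℝ}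
    (hw : ∀ i, 0 < w i) {lam : ℝ} (h : ∀ i, (A *ᵥ w) i ≤ lam * w i) {μ : ℂ} {v : ι → ℂ}
    (hv : v ≠ 0) (hμ : A.map Complex.ofReal *ᵥ v = μ • v) : ‖μ‖ ≤ lam := by
  obtain ⟨j₀, hj₀⟩ : ∃ j, v j ≠ 0 := by simpa [funext_iff] using hv
  have : Nonempty ι := ⟨j₀⟩
  -- the entry where `|v| / w` is largest controls the eigenvalue
  obtain ⟨i, hi⟩ := Finite.exists_max fun j => ‖v j‖ / w j
  set c := ‖v i‖ / w i
  have hvc : ∀ j, ‖v j‖ ≤ c * w j := fun j => (div_le_iff₀ (hw j)).1 (hi j)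
  have hc : 0 < c := (div_pos (norm_pos_iff.2 hj₀) (hw j₀)).trans_le (hi j₀)
  have hvi : 0 < ‖v i‖ := by
    have := mul_pos hc (hw i)
    rwa [div_mul_cancel₀ _ (hw i).ne'] at this
  have key : ‖μ‖ * ‖v i‖ ≤ lam * ‖v i‖ := calc
    ‖μ‖ * ‖v i‖ = ‖∑ j, (A i j : ℂ) * v j‖ := by
      rw [← norm_mul, ← smul_eq_mul, ← Pi.smul_apply, ← hμ]; rfl
    _ ≤ ∑ j, A i j * (c * w j) := by
      refine (norm_sum_le _ _).trans (Finset.sum_le_sum fun j _ => ?_)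
      rw [norm_mul, Complex.norm_real, Real.norm_of_nonneg (hA i j)]
      exact mul_le_mul_of_nonneg_left (hvc j) (hA i j)
    _ = c * (A *ᵥ w) i := by
      simp only [mulVec, dotProduct, Finset.mul_sum]
      exact Finset.sum_congr rfl fun j _ => by ring
    _ ≤ c * (lam * w i) := mul_le_mul_of_nonneg_left (h i) hc.le
    _ = lam * ‖v i‖ := by
      rw [div_mul_eq_mul_div, mul_div_assoc, mul_div_cancel_right₀ _ (hw i).ne', mul_comm]
  exact le_of_mul_le_mul_right key hvi

lemma specRad_le_of_mulVec_le {n : ℕ} (A : Matrix (Fin n) (Fin n) ℝ) (hA : ∀ i j, 0 ≤ A i j)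
    {w : Fin n → ℝ} (hw : ∀ i, 0 < w i) {lam : ℝ} (hlam : 0 ≤ lam)
    (h : ∀ i, (A *ᵥ w) i ≤ lam * w i) : specRad A ≤ lam := by
  refine Real.sSup_le ?_ hlam
  rintro _ ⟨μ, hμ, rfl⟩
  rw [← Matrix.spectrum_toLin', ← Module.End.hasEigenvalue_iff_mem_spectrum] at hμ
  obtain ⟨v, hv⟩ := hμ.exists_hasEigenvector
  exact norm_le_of_mulVec_le A hA hw h hv.2 (by simpa using hv.apply_eq_smul)

lemma pow_smul_le_pow_mulVec (A : Matrix ι ι ℝ) [DecidableEq ι] (hA : ∀ i j, 0 ≤ A i j)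
    {w : ι → ℝ} {lam : ℝ} (hlam : 0 ≤ lam) (h : ∀ i, lam * w i ≤ (A *ᵥ w) i) (k : ℕ) (i : ι) :
    lam ^ k * w i ≤ (A ^ k *ᵥ w) i := by
  induction k generalizing i with
  | zero => simp
  | succ k ih => calc
    lam ^ (k + 1) * w i ≤ lam ^ k * (A *ᵥ w) i := by
      rw [pow_succ, mul_assoc]; exact mul_le_mul_of_nonneg_left (h i) (pow_nonneg hlam k)
    _ = (A *ᵥ (lam ^ k • w)) i := by rw [mulVec_smul]; rfl
    _ ≤ (A *ᵥ (A ^ k *ᵥ w)) i :=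
      Finset.sum_le_sum fun j _ => mul_le_mul_of_nonneg_left (ih j) (hA i j)
    _ = (A ^ (k + 1) *ᵥ w) i := by rw [mulVec_mulVec, pow_succ']

attribute [local instance] Matrix.linftyOpNormedAddCommGroup Matrix.linftyOpNormedRing
  Matrix.linftyOpNormedAlgebra

lemma pow_le_norm_pow (A : Matrix ι ι ℝ) [DecidableEq ι] [Nonempty ι] (hA : ∀ i j, 0 ≤ A i j)
    {w : ι → ℝ} (hw : ∀ i, 0 < w i) {lam : ℝ} (hlam : 0 ≤ lam)
    (h : ∀ i, lam * w i ≤ (A *ᵥ w) i) (k : ℕ) : lam ^ k ≤ ‖A ^ k‖ := by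
  obtain ⟨i, hi⟩ := Finite.exists_max w
  have hw_norm : ‖w‖ ≤ w i := (pi_norm_le_iff_of_nonneg (hw i).le).2 fun j => by
    rw [Real.norm_of_nonneg (hw j).le]; exact hi j
  refine le_of_mul_le_mul_right ?_ (hw i)
  calc lam ^ k * w i ≤ (A ^ k *ᵥ w) i := pow_smul_le_pow_mulVec A hA hlam h k i
    _ ≤ ‖A ^ k *ᵥ w‖ := (le_abs_self _).trans (norm_le_pi_norm (A ^ k *ᵥ w) i)
    _ ≤ ‖A ^ k‖ * ‖w‖ := linfty_opNorm_mulVec _ _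
    _ ≤ ‖A ^ k‖ * w i := mul_le_mul_of_nonneg_left hw_norm (norm_nonneg _)

lemma ofReal_le_spectralRadius {𝔸 : Type*} [NormedRing 𝔸] [NormedAlgebra ℂ 𝔸] [CompleteSpace 𝔸]
    (a : 𝔸) {lam : ℝ} (hlam : 0 ≤ lam) (h : ∀ k : ℕ, lam ^ k ≤ ‖a ^ k‖) :
    ENNReal.ofReal lam ≤ spectralRadius ℂ a := by
  refine ge_of_tendsto (spectrum.pow_nnnorm_pow_one_div_tendsto_nhds_spectralRadius a) ?_
  filter_upwards [eventually_ne_atTop 0] with k hk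
  calc ENNReal.ofReal lam = (ENNReal.ofReal (lam ^ k)) ^ (1 / k : ℝ) := by
        rw [ENNReal.ofReal_pow hlam, ← ENNReal.rpow_natCast, ← ENNReal.rpow_mul,
          mul_one_div_cancel (Nat.cast_ne_zero.2 hk), ENNReal.rpow_one]
    _ ≤ (‖a ^ k‖₊ : ℝ≥0∞) ^ (1 / k : ℝ) := by
        gcongr
        rw [← ENNReal.ofReal_coe_nnreal, coe_nnnorm]
        exact ENNReal.ofReal_le_ofReal (h k)

lemma spectralRadius_le_ofReal_specRad {n : ℕ} (A : Matrix (Fin n) (Fin n) ℝ) :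
    spectralRadius ℂ (A.map Complex.ofReal) ≤ ENNReal.ofReal (specRad A) := by
  have hbdd : BddAbove {x : ℝ | ∃ μ ∈ spectrum ℂ (A.map Complex.ofReal), x = ‖μ‖} := by
    obtain ⟨C, hC⟩ := ((spectrum.isCompact (𝕜 := ℂ) (A.map Complex.ofReal)).image
      (continuous_norm (E := ℂ))).bddAbove
    exact ⟨C, by rintro _ ⟨μ, hμ, rfl⟩; exact hC ⟨μ, hμ, rfl⟩⟩
  refine iSup₂_le fun μ hμ => ?_
  rw [← ENNReal.ofReal_coe_nnreal, coe_nnnorm]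
  exact ENNReal.ofReal_le_ofReal (le_csSup hbdd ⟨μ, hμ, rfl⟩)

lemma le_specRad_of_le_mulVec {n : ℕ} [NeZero n] (A : Matrix (Fin n) (Fin n) ℝ)
    (hA : ∀ i j, 0 ≤ A i j) {w : Fin n → ℝ} (hw : ∀ i, 0 < w i) {lam : ℝ} (hlam : 0 ≤ lam)
    (h : ∀ i, lam * w i ≤ (A *ᵥ w) i) : lam ≤ specRad A := by
  have hpow : ∀ k : ℕ, lam ^ k ≤ ‖A.map Complex.ofReal ^ k‖ := fun k => by
    have hnorm : ‖A.map Complex.ofReal ^ k‖ = ‖A ^ k‖ := by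
      rw [show A.map Complex.ofReal = A.map Complex.ofRealHom from rfl, ← Matrix.map_pow]
      simp [linfty_opNorm_def]
    rw [hnorm]; exact pow_le_norm_pow A hA hw hlam h k
  have hspec : 0 ≤ specRad A := Real.sSup_nonneg fun _ ⟨μ, _, hx⟩ => hx ▸ norm_nonneg μ
  exact (ENNReal.ofReal_le_ofReal_iff hspec).1
    ((ofReal_le_spectralRadius _ hlam hpow).trans (spectralRadius_le_ofReal_specRad A))

end CollatzWielandt

lemma sum_ite_succ_eq_mul {T : ℕ} (u : ℕ → ℝ) (hu0 : u 0 = 0) (a : ℝ) {k : ℕ} (hk : k ≤ T) :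
    ∑ j : Fin T, (if (j : ℕ) + 1 = k then a else 0) * u (j + 1) = a * u k := by
  have h := Finset.sum_range_succ' (fun j => (if j = k then a else 0) * u j) T
  simp only [hu0, mul_zero, add_zero, ite_mul, zero_mul, Finset.sum_ite_eq',
    Finset.mem_range, Nat.lt_succ_of_le hk, if_true] at h
  rw [Fin.sum_univ_eq_sum_range (fun j => (if j + 1 = k then a else 0) * u (j + 1)), h]
  simp only [ite_mul, zero_mul]

section MatrixAT

variable (L1 K1 rho β : ℝ) {T : ℕ}

lemma Kbar_add_eq_Khat : Kbar L1 K1 rho β + Lbar L1 K1 β * K1 / rho = Khat L1 K1 rho β := by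
  rw [Khat]; ring

lemma AT_sub_mul_AT (i i' j : Fin T) (hi : (i : ℕ) + 1 = i') :
    AT L1 K1 rho β T i j - β * AT L1 K1 rho β T i' j
      = (if (j : ℕ) + 1 = i then Khat L1 K1 rho β else 0)
        - (if (j : ℕ) + 1 = i + 1 then β * Kbar L1 K1 rho β else 0) := by
  have := j.isLt
  simp only [AT, ← Kbar_add_eq_Khat]
  split_ifs <;> first
    | omega
    | (rw [show T - (i : ℕ) = T - i' + 1 by omega, pow_succ]; ring)
    | (rw [show (j : ℕ) - i + 1 = j - i' + 1 + 1 by omega, pow_succ]; ring)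
    | (rw [show (j : ℕ) - i + 1 = 1 by omega]; ring)
    | ring

lemma AT_last_row (i j : Fin T) (hi : (i : ℕ) + 1 = T) :
    AT L1 K1 rho β T i j
      = (if (j : ℕ) + 1 = i then Khat L1 K1 rho β else 0)
        + (if (j : ℕ) + 1 = T then L1 * K1 / rho * β else 0) := by
  have := j.isLt
  simp only [AT, ← Kbar_add_eq_Khat]
  split_ifs <;> first
    | omega
    | (rw [show T - (i : ℕ) = 1 by omega]; ring)
    | ring

lemma AT_mulVec_sub_mul_AT_mulVec (u : ℕ → ℝ) (hu0 : u 0 = 0) (i i' : Fin T)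
    (hi : (i : ℕ) + 1 = i') :
    (AT L1 K1 rho β T *ᵥ fun j => u (j + 1)) i - β * (AT L1 K1 rho β T *ᵥ fun j => u (j + 1)) i'
      = Khat L1 K1 rho β * u i - β * Kbar L1 K1 rho β * u (i + 1) := by
  have hrow : ∀ j : Fin T,
      AT L1 K1 rho β T i j * u (j + 1) - β * (AT L1 K1 rho β T i' j * u (j + 1))
        = (if (j : ℕ) + 1 = i then Khat L1 K1 rho β else 0) * u (j + 1)
          - (if (j : ℕ) + 1 = i + 1 then β * Kbar L1 K1 rho β else 0) * u (j + 1) := fun j => by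
    rw [← sub_mul, ← AT_sub_mul_AT L1 K1 rho β i i' j hi]; ring
  simp only [mulVec, dotProduct, Finset.mul_sum, ← Finset.sum_sub_distrib, hrow]
  rw [Finset.sum_sub_distrib, sum_ite_succ_eq_mul u hu0 _ i.isLt.le,
    sum_ite_succ_eq_mul u hu0 _ (by omega)]

lemma AT_mulVec_last (u : ℕ → ℝ) (hu0 : u 0 = 0) (i : Fin T) (hi : (i : ℕ) + 1 = T) :
    (AT L1 K1 rho β T *ᵥ fun j => u (j + 1)) i
      = Khat L1 K1 rho β * u i + L1 * K1 / rho * β * u T := by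
  simp only [mulVec, dotProduct, AT_last_row L1 K1 rho β i _ hi, add_mul, Finset.sum_add_distrib]
  rw [sum_ite_succ_eq_mul u hu0 _ i.isLt.le, sum_ite_succ_eq_mul u hu0 _ le_rfl]

lemma AT_mulVec_sub_mul_eq_pow_mul (u : ℕ → ℝ) (hu0 : u 0 = 0) {lam : ℝ}
    (hrec : ∀ n, β * lam * u (n + 2) + Khat L1 K1 rho β * u n
      = (lam + β * Kbar L1 K1 rho β) * u (n + 1)) (i : Fin T) :
    (AT L1 K1 rho β T *ᵥ fun j => u (j + 1)) i - lam * u (i + 1)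
      = β ^ (T - i) * ((Kbar L1 K1 rho β + L1 * K1 / rho) * u T - lam * u (T + 1)) := by
  suffices h : ∀ m, ∀ i : Fin T, (i : ℕ) + 1 + m = T →
      (AT L1 K1 rho β T *ᵥ fun j => u (j + 1)) i - lam * u (i + 1)
        = β ^ (T - i) * ((Kbar L1 K1 rho β + L1 * K1 / rho) * u T - lam * u (T + 1)) from
    h (T - i - 1) i (by omega)
  intro m
  induction m with
  | zero =>
    intro i hi
    have h := hrec i
    rw [show (i : ℕ) + 1 = T by omega, show (i : ℕ) + 2 = T + 1 by omega] at h
    rw [AT_mulVec_last L1 K1 rho β u hu0 i hi, hi, show T - i = 1 by omega, pow_one]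
    linear_combination h
  | succ m ih =>
    intro i hi
    let i' : Fin T := ⟨i + 1, by omega⟩
    have hstep := AT_mulVec_sub_mul_AT_mulVec L1 K1 rho β u hu0 i i' rfl
    have hnext := ih i' (by simp only [i']; omega)
    rw [show T - i = T - i' + 1 by simp only [i']; omega, pow_succ]
    simp only [i'] at hnext
    linear_combination hstep + β * hnext + hrec i

end MatrixAT

noncomputable def geomSin (r θ : ℝ) (n : ℕ) : ℝ := r ^ n * sin (n * θ)

lemma geomSin_zero (r θ : ℝ) : geomSin r θ 0 = 0 := by simp [geomSin]

lemma geomSin_add_two (r θ : ℝ) (n : ℕ) :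
    geomSin r θ (n + 2) = 2 * r * cos θ * geomSin r θ (n + 1) - r ^ 2 * geomSin r θ n := by
  have h : sin ((n + 2) * θ) + sin (n * θ) = 2 * sin ((n + 1) * θ) * cos θ := by
    rw [show ((n : ℝ) + 2) * θ = (n + 1) * θ + θ by ring,
      show (n : ℝ) * θ = (n + 1) * θ - θ by ring, sin_add, sin_sub]
    ring
  simp only [geomSin, Nat.cast_add, Nat.cast_ofNat, Nat.cast_one]
  linear_combination r ^ (n + 2) * h

lemma geomSin_pos {r θ : ℝ} (hr : 0 < r) (hθ : 0 < θ) {n : ℕ} (hn : 0 < n) (hnθ : n * θ < π) :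
    0 < geomSin r θ n :=
  mul_pos (pow_pos hr n) (sin_pos_of_pos_of_lt_pi (by positivity) hnθ)

lemma mul_cos_mul_geomSin_le {r θ : ℝ} (hr : 0 ≤ r) (hθ : 0 ≤ θ) (hθπ : θ ≤ π) {n : ℕ}
    (hn : 0 ≤ cos (n * θ)) :
    r * cos θ * geomSin r θ n ≤ geomSin r θ (n + 1) := by
  have hsin : sin (n * θ) * cos θ ≤ sin ((n + 1 : ℕ) * θ) := by
    rw [Nat.cast_succ, add_mul, one_mul, sin_add, le_add_iff_nonneg_right]
    exact mul_nonneg hn (sin_nonneg_of_nonneg_of_le_pi hθ hθπ)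
  calc r * cos θ * geomSin r θ n = r ^ (n + 1) * (sin (n * θ) * cos θ) := by
        rw [geomSin, pow_succ]; ring
    _ ≤ geomSin r θ (n + 1) := mul_le_mul_of_nonneg_left hsin (pow_nonneg hr _)

lemma mul_pi_div_lt_pi {m N : ℝ} (hm : 0 ≤ m) (h : m < N) : m * (π / N) < π := by
  rw [← mul_div_assoc, div_lt_iff₀ (hm.trans_lt h), mul_comm]
  exact mul_lt_mul_of_pos_left h pi_pos

noncomputable def largerRoot (Kb Kh β c : ℝ) : ℝ := √(Kh * β) * c + √((Kh * c ^ 2 - Kb) * β)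

section LargerRoot

variable {Kb Kh β c : ℝ}

lemma largerRoot_pos (hKhβ : 0 < Kh * β) (hc : 0 < c) : 0 < largerRoot Kb Kh β c :=
  add_pos_of_pos_of_nonneg (mul_pos (sqrt_pos.2 hKhβ) hc) (sqrt_nonneg _)

lemma largerRoot_sq_add (hKh : 0 ≤ Kh) (hβ : 0 ≤ β) (hq : Kb ≤ Kh * c ^ 2) :
    largerRoot Kb Kh β c ^ 2 + Kb * β = 2 * largerRoot Kb Kh β c * √(Kh * β) * c := by
  have ha := sq_sqrt (mul_nonneg hKh hβ)
  have hy := sq_sqrt (mul_nonneg (sub_nonneg.2 hq) hβ)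
  rw [largerRoot]
  linear_combination hy - c ^ 2 * ha

lemma le_sq_largerRoot (hKh : 0 ≤ Kh) (hβ : 0 ≤ β) (hc : 0 ≤ c) (hq : Kb ≤ Kh * c ^ 2) :
    β * (2 * Kh * c ^ 2 - Kb) ≤ largerRoot Kb Kh β c ^ 2 := by
  have ha := sq_sqrt (mul_nonneg hKh hβ)
  have hy := sq_sqrt (mul_nonneg (sub_nonneg.2 hq) hβ)
  have hcross : 0 ≤ √(Kh * β) * c * √((Kh * c ^ 2 - Kb) * β) := by positivity
  rw [largerRoot]
  nlinarith

lemma geomSin_recurrence {s θ : ℝ} (hKh : 0 ≤ Kh) (hβ : 0 < β) (hs : 0 < s)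
    (hq : s ^ 2 + Kb * β = 2 * s * √(Kh * β) * cos θ) (n : ℕ) :
    β * s ^ 2 * geomSin (√(Kh * β) / (β * s)) θ (n + 2) + Kh * geomSin (√(Kh * β) / (β * s)) θ n
      = (s ^ 2 + β * Kb) * geomSin (√(Kh * β) / (β * s)) θ (n + 1) := by
  set r := √(Kh * β) / (β * s)
  have hr2 : β * s ^ 2 * r ^ 2 = Kh := by
    rw [div_pow, sq_sqrt (mul_nonneg hKh hβ.le)]
    field_simp
  have hr1 : β * s ^ 2 * (2 * r * cos θ) = s ^ 2 + β * Kb := by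
    rw [show β * s ^ 2 * (2 * r * cos θ) = 2 * s * √(Kh * β) * cos θ by
      simp only [r]; field_simp]
    linear_combination -hq
  rw [geomSin_add_two]
  linear_combination geomSin r θ (n + 1) * hr1 - geomSin r θ n * hr2

end LargerRoot

structure Admissible (L1 K1 rho β : ℝ) : Prop where
  L1_pos : 0 < L1
  K1_pos : 0 < K1
  rho_pos : 0 < rho
  β_pos : 0 < β
  β_lt_one : β < 1
  β_mul_K1_lt_two : β * K1 < 2

namespace Admissible

variable {L1 K1 rho β : ℝ} (hP : Admissible L1 K1 rho β)
include hP

lemma Lbar_pos : 0 < Lbar L1 K1 β :=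
  div_pos hP.L1_pos (by linarith [hP.β_mul_K1_lt_two])

lemma lt_Lbar : L1 < Lbar L1 K1 β := by
  rw [Lbar, lt_div_iff₀ (by linarith [hP.β_mul_K1_lt_two])]
  nlinarith [mul_pos hP.L1_pos (mul_pos hP.β_pos hP.K1_pos)]

lemma Kbar_pos : 0 < Kbar L1 K1 rho β := by
  have := hP.Lbar_pos
  have := hP.K1_pos
  have := hP.rho_pos
  have : 0 < 1 - β := by linarith [hP.β_lt_one]
  rw [Kbar]; positivity

lemma Kbar_add_lt_Khat : Kbar L1 K1 rho β + L1 * K1 / rho < Khat L1 K1 rho β := by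
  rw [Khat, add_lt_add_iff_left, mul_comm K1]
  have := hP.K1_pos
  have := hP.rho_pos
  gcongr
  exact hP.lt_Lbar

lemma L1_mul_K1_div_rho_pos : 0 < L1 * K1 / rho :=
  div_pos (mul_pos hP.L1_pos hP.K1_pos) hP.rho_pos

lemma Khat_pos : 0 < Khat L1 K1 rho β :=
  (add_pos hP.Kbar_pos hP.L1_mul_K1_div_rho_pos).trans hP.Kbar_add_lt_Khat

lemma AT_nonneg {T : ℕ} (i j : Fin T) : 0 ≤ AT L1 K1 rho β T i j := by
  have := hP.Lbar_pos
  have := hP.Kbar_pos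
  have := hP.K1_pos
  have := hP.rho_pos
  have := hP.β_pos
  have := hP.L1_mul_K1_div_rho_pos
  simp only [AT]
  split_ifs <;> positivity

variable {T : ℕ}

lemma sq_largerRoot_le_specRad_AT (hT : 0 < T) (hc : 0 < cos (π / (T + 1)))
    (hq : Kbar L1 K1 rho β ≤ Khat L1 K1 rho β * cos (π / (T + 1)) ^ 2) :
    largerRoot (Kbar L1 K1 rho β) (Khat L1 K1 rho β) β (cos (π / (T + 1))) ^ 2
      ≤ specRad (AT L1 K1 rho β T) := by
  have : NeZero T := ⟨hT.ne'⟩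
  have hKh := hP.Khat_pos
  have hβ := hP.β_pos
  set θ := π / (T + 1)
  set s := largerRoot (Kbar L1 K1 rho β) (Khat L1 K1 rho β) β (cos θ)
  have hs : 0 < s := largerRoot_pos (mul_pos hKh hβ) hc
  set r := √(Khat L1 K1 rho β * β) / (β * s)
  have hr : 0 < r := div_pos (sqrt_pos.2 (mul_pos hKh hβ)) (mul_pos hβ hs)
  have hu : ∀ m : ℕ, 0 < m → m ≤ T → 0 < geomSin r θ m := fun m hm hmT =>
    geomSin_pos hr (by positivity) hm
      (mul_pi_div_lt_pi (Nat.cast_nonneg m) (by norm_cast; omega))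
  have hend : geomSin r θ (T + 1) = 0 := by
    rw [geomSin, Nat.cast_succ, mul_div_cancel₀ _ (by positivity), sin_pi, mul_zero]
  refine le_specRad_of_le_mulVec _ hP.AT_nonneg (fun j => hu _ (Nat.succ_pos j) j.isLt)
    (sq_nonneg s) fun i => ?_
  have h := AT_mulVec_sub_mul_eq_pow_mul L1 K1 rho β _ (geomSin_zero r θ)
    (geomSin_recurrence hKh.le hβ hs (largerRoot_sq_add hKh.le hβ.le hq)) i
  rw [hend, mul_zero, sub_zero] at h
  have := hu T hT le_rfl
  have := hP.Kbar_pos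
  have := hP.L1_mul_K1_div_rho_pos
  have : 0 ≤ β ^ (T - i) * ((Kbar L1 K1 rho β + L1 * K1 / rho) * geomSin r θ T) := by
    positivity
  linarith

lemma specRad_AT_le_sq_largerRoot (hT : 0 < T)
    (hq : Kbar L1 K1 rho β + L1 * K1 / rho ≤ Khat L1 K1 rho β * cos (π / (2 * T + 1)) ^ 2) :
    specRad (AT L1 K1 rho β T)
      ≤ largerRoot (Kbar L1 K1 rho β) (Khat L1 K1 rho β) β (cos (π / (2 * T + 1))) ^ 2 := by
  have hKh := hP.Khat_pos
  have hβ := hP.β_pos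
  have hd := hP.L1_mul_K1_div_rho_pos
  have hT' : (1 : ℝ) ≤ T := by exact_mod_cast hT
  set θ := π / (2 * T + 1)
  have hθ : 0 < θ := by positivity
  have hθ2 : θ < π / 2 := div_lt_div_of_pos_left pi_pos two_pos (by linarith)
  have hc : 0 < cos θ := cos_pos_of_mem_Ioo ⟨by linarith, hθ2⟩
  have hq' : Kbar L1 K1 rho β ≤ Khat L1 K1 rho β * cos θ ^ 2 := by linarith
  set s := largerRoot (Kbar L1 K1 rho β) (Khat L1 K1 rho β) β (cos θ)
  have hs : 0 < s := largerRoot_pos (mul_pos hKh hβ) hc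
  set r := √(Khat L1 K1 rho β * β) / (β * s)
  have hr : 0 < r := div_pos (sqrt_pos.2 (mul_pos hKh hβ)) (mul_pos hβ hs)
  have hu : ∀ m : ℕ, 0 < m → m ≤ T → 0 < geomSin r θ m := fun m hm hmT =>
    geomSin_pos hr hθ hm
      (mul_pi_div_lt_pi (Nat.cast_nonneg m) (by linarith [(Nat.cast_le (α := ℝ)).2 hmT]))
  have hTθ : 0 ≤ cos (T * θ) := by
    refine cos_nonneg_of_mem_Icc ⟨by linarith [mul_nonneg (Nat.cast_nonneg T) hθ.le], ?_⟩
    rw [← mul_div_assoc, div_le_div_iff₀ (by positivity) two_pos]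
    nlinarith [pi_pos]
  have hstep := mul_cos_mul_geomSin_le hr.le hθ.le (by linarith [pi_pos]) hTθ
  have hroot : s ^ 2 + Kbar L1 K1 rho β * β = 2 * s * √(Khat L1 K1 rho β * β) * cos θ :=
    largerRoot_sq_add hKh.le hβ.le hq'
  have hbig := le_sq_largerRoot hKh.le hβ.le hc.le hq'
  have hsrc : s ^ 2 * (r * cos θ) = (s ^ 2 + Kbar L1 K1 rho β * β) / (2 * β) := by
    rw [hroot]; simp only [r]; field_simp
  have hmargin : 2 * β * (Kbar L1 K1 rho β + L1 * K1 / rho) ≤ s ^ 2 + Kbar L1 K1 rho β * β := by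
    nlinarith [mul_le_mul_of_nonneg_left hq hβ.le]
  have hkey : (Kbar L1 K1 rho β + L1 * K1 / rho) * geomSin r θ T ≤ s ^ 2 * geomSin r θ (T + 1) :=
    calc (Kbar L1 K1 rho β + L1 * K1 / rho) * geomSin r θ T
        ≤ (s ^ 2 + Kbar L1 K1 rho β * β) / (2 * β) * geomSin r θ T := by
          gcongr
          · exact (hu T hT le_rfl).le
          · rwa [le_div_iff₀ (by positivity), mul_comm]
      _ = s ^ 2 * (r * cos θ * geomSin r θ T) := by rw [← hsrc]; ring
      _ ≤ s ^ 2 * geomSin r θ (T + 1) := mul_le_mul_of_nonneg_left hstep (sq_nonneg s)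
  refine specRad_le_of_mulVec_le _ hP.AT_nonneg (fun j => hu _ (Nat.succ_pos j) j.isLt)
    (sq_nonneg s) fun i => ?_
  have h := AT_mulVec_sub_mul_eq_pow_mul L1 K1 rho β _ (geomSin_zero r θ)
    (geomSin_recurrence hKh.le hβ hs hroot) i
  have : β ^ (T - i) * ((Kbar L1 K1 rho β + L1 * K1 / rho) * geomSin r θ T
      - s ^ 2 * geomSin r θ (T + 1)) ≤ 0 :=
    mul_nonpos_of_nonneg_of_nonpos (pow_nonneg hβ.le _) (by linarith)
  linarith

end Admissible

lemma eventually_le_mul_cos_sq {k K : ℝ} (h : k < K) :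
    ∀ᶠ T : ℕ in atTop, k ≤ K * cos (π / (T + 1)) ^ 2 := by
  have hθ : Tendsto (fun T : ℕ => π / ((T : ℝ) + 1)) atTop (𝓝 0) :=
    tendsto_const_nhds.div_atTop (tendsto_atTop_add_const_right _ 1 tendsto_natCast_atTop_atTop)
  have hcos := (((continuous_cos.tendsto 0).comp hθ).pow 2).const_mul K
  rw [cos_zero, one_pow, mul_one] at hcos
  exact hcos.eventually_const_le h

lemma le_of_sq_add_eq_of_le {a k s t p q : ℝ} (ha : 0 < a) (hs : 0 < s) (hst : s ≤ t)
    (hk : k ≤ s * t) (hp : s ^ 2 + k = 2 * s * a * p) (hq : t ^ 2 + k = 2 * t * a * q) :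
    p ≤ q := by
  have h : 2 * a * s * t * (q - p) = (t - s) * (s * t - k) := by
    linear_combination t * hp - s * hq
  have : 0 ≤ 2 * a * s * t * (q - p) := h ▸ mul_nonneg (sub_nonneg.2 hst) (sub_nonneg.2 hk)
  have hpos : 0 < 2 * a * s * t := by have := hs.trans_le hst; positivity
  linarith [(mul_nonneg_iff_of_pos_left hpos).1 this]

lemma le_and_le_of_sq_add_eq {a k s σ t p c q : ℝ} (ha : 0 < a) (hs : 0 < s) (hk : k ≤ s ^ 2)
    (hsσ : s ≤ σ) (hσt : σ ≤ t) (hp : s ^ 2 + k = 2 * s * a * p)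
    (hc : σ ^ 2 + k = 2 * σ * a * c) (hq : t ^ 2 + k = 2 * t * a * q) : p ≤ c ∧ c ≤ q :=
  ⟨le_of_sq_add_eq_of_le ha hs hsσ (hk.trans (by nlinarith)) hp hc,
    le_of_sq_add_eq_of_le ha (hs.trans_le hsσ) hσt (hk.trans (by nlinarith)) hc hq⟩

lemma cos_pi_div_add_one_pos {x : ℝ} (hx : 1 < x) : 0 < cos (π / (x + 1)) :=
  cos_pos_of_mem_Ioo ⟨by linarith [div_pos pi_pos (by linarith : 0 < x + 1), pi_pos],
    div_lt_div_of_pos_left pi_pos two_pos (by linarith)⟩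

lemma cos_pi_div_add_one_le {x : ℝ} (hx : 0 ≤ x) :
    cos (π / (x + 1)) ≤ cos (π / (2 * x + 1)) :=
  cos_le_cos_of_nonneg_of_le_pi (by positivity) (div_le_self pi_pos.le (by linarith))
    (div_le_div_of_nonneg_left pi_pos.le (by positivity) (by linarith))

/-- Refined asymptotic two-sided bound on `√(ρ(A_T))` (Corollary 3.11), together with
the consequence for the angle `θ_T ∈ (0, π)` defined by
`ρ(A_T) = -K̄β + 2√(ρ(A_T) β K̂) cos θ_T`. -/
theorem stmt10 (L1 K1 rho β : ℝ)
    (hL1 : 0 < L1) (hK1 : 0 < K1) (hrho : 0 < rho)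
    (hβ0 : 0 < β) (hβ1 : β < 1) (hβK : β * K1 < 2) :
    ∃ T0 : ℕ, ∀ T : ℕ, T0 ≤ T →
      (Real.sqrt (Khat L1 K1 rho β * β) * Real.cos (Real.pi / ((T : ℝ) + 1))
          + Real.sqrt ((Khat L1 K1 rho β * (Real.cos (Real.pi / ((T : ℝ) + 1))) ^ 2
              - Kbar L1 K1 rho β) * β)
        ≤ Real.sqrt (specRad (AT L1 K1 rho β T))
      ∧ Real.sqrt (specRad (AT L1 K1 rho β T))
        ≤ Real.sqrt (Khat L1 K1 rho β * β) * Real.cos (Real.pi / (2 * (T : ℝ) + 1))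
          + Real.sqrt ((Khat L1 K1 rho β * (Real.cos (Real.pi / (2 * (T : ℝ) + 1))) ^ 2
              - Kbar L1 K1 rho β) * β))
      ∧ ∀ θ : ℝ, θ ∈ Set.Ioo 0 Real.pi →
          specRad (AT L1 K1 rho β T)
            = -(Kbar L1 K1 rho β * β)
              + 2 * Real.sqrt (specRad (AT L1 K1 rho β T) * β * Khat L1 K1 rho β)
                * Real.cos θ →
          Real.cos (Real.pi / ((T : ℝ) + 1)) ≤ Real.cos θ
            ∧ Real.cos θ ≤ Real.cos (Real.pi / (2 * (T : ℝ) + 1)) := by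
  have hP : Admissible L1 K1 rho β := ⟨hL1, hK1, hrho, hβ0, hβ1, hβK⟩
  have hKh := hP.Khat_pos
  have hd := hP.L1_mul_K1_div_rho_pos
  obtain ⟨T0, hT0⟩ := eventually_atTop.1
    ((eventually_le_mul_cos_sq hP.Kbar_add_lt_Khat).and (eventually_ge_atTop 2))
  refine ⟨T0, fun T hT => ?_⟩
  obtain ⟨hq, hT2⟩ := hT0 T hT
  have hcm := cos_pi_div_add_one_pos (by exact_mod_cast hT2 : (1 : ℝ) < T)
  have hcmp := cos_pi_div_add_one_le (Nat.cast_nonneg T)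
  have hqp := hq.trans (by gcongr : _ ≤ Khat L1 K1 rho β * cos (π / (2 * T + 1)) ^ 2)
  set sm := largerRoot (Kbar L1 K1 rho β) (Khat L1 K1 rho β) β (cos (π / (T + 1)))
  set sp := largerRoot (Kbar L1 K1 rho β) (Khat L1 K1 rho β) β (cos (π / (2 * T + 1)))
  set ρ := specRad (AT L1 K1 rho β T)
  have hsm : 0 < sm := largerRoot_pos (mul_pos hKh hβ0) hcm
  have hlow : sm ^ 2 ≤ ρ := hP.sq_largerRoot_le_specRad_AT (by omega) hcm (by linarith)
  have hup : ρ ≤ sp ^ 2 := hP.specRad_AT_le_sq_largerRoot (by omega) hqp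
  have hσm : sm ≤ √ρ := le_sqrt_of_sq_le hlow
  have hσp : √ρ ≤ sp :=
    (sqrt_le_left (largerRoot_pos (mul_pos hKh hβ0) (hcm.trans_le hcmp)).le).2 hup
  refine ⟨⟨hσm, hσp⟩, fun θ _ hθ => ?_⟩
  have hρ : 0 < ρ := (pow_pos hsm 2).trans_le hlow
  rw [show ρ * β * Khat L1 K1 rho β = ρ * (Khat L1 K1 rho β * β) by ring, sqrt_mul hρ.le] at hθ
  have hk : Kbar L1 K1 rho β * β ≤ sm ^ 2 := by
    nlinarith [le_sq_largerRoot hKh.le hβ0.le hcm.le (by linarith : Kbar L1 K1 rho β ≤ _)]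
  exact le_and_le_of_sq_add_eq (sqrt_pos.2 (mul_pos hKh hβ0)) hsm hk hσm hσp
    (largerRoot_sq_add hKh.le hβ0.le (by linarith)) (by rw [sq_sqrt hρ.le]; linarith)
    (largerRoot_sq_add hKh.le hβ0.le (by linarith))
end

section
/- Assume additionally 0 < K̄ < 1. There exists an integer T₀ such that for every integer T ≥ T₀: K̄β + 2√(βL̄K₁/ρ) ≥ ρ(B_T) ≥ (2K̄β·cos²(π/(T+2)) − K̄β) + (1/2)·√( (4K̄β·cos²(π/(T+2)) − 2K̄β)² − 4·((K̄β)² − 4·(βL̄K₁/ρ)·cos²(π/(T+2))) ). -/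
noncomputable section

/-- The `(T+1) × (T+1)` matrix `B_T` (1-based indices `1 ≤ i, j ≤ T+1`): entry `β` on the
superdiagonal `j = i + 1`, entry `(L̄K₁/ρ) K̄^{i-j-1}` if `j < i`, and `0` otherwise. -/
def BT (L1 K1 rho β : ℝ) (T : ℕ) : Matrix (Fin (T + 1)) (Fin (T + 1)) ℝ :=
  fun i j =>
    if (j : ℕ) = (i : ℕ) + 1 then β
    else if (j : ℕ) < (i : ℕ) then
      (Lbar L1 K1 β * K1 / rho) * (Kbar L1 K1 rho β) ^ ((i : ℕ) - (j : ℕ) - 1)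
    else 0

end

/-!
Both bounds are Collatz–Wielandt bounds for the nonnegative matrix `B_T`, which depends only on
`β`, `c = L̄K₁/ρ` and `K = K̄`; the lower one passes through Gelfand's formula.

Upper bound: for the test vector `vⱼ = tʲ` with `t = K + u`, `u = √(c/β)`, the geometric sum
`∑_{k<i} K^(i-k-1) tᵏ` below the diagonal of row `i` is at most `tⁱ/u`, so
`B_T v ≤ (Kβ + βu + c/u) v = (Kβ + 2√(βc)) v`.

Lower bound: writing `Sₘ = ∑_{k<m} K^(m-k-1) vₖ`, so that `Sₘ₊₁ = K Sₘ + vₘ`, the inequality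
`B_T v ≥ λ v` follows from the three-term recurrence `β vₖ₊₂ = (λ + Kβ) vₖ₊₁ - (Kλ + c) vₖ`
(with `v₋₁ = 0` and `v_{T+1} = 0`). If its characteristic roots are `ρ e^{±iθ}`, then
`vₖ = ρ^(k+1) sin ((k+1) θ)` solves it, and `θ = π/(T+2)` makes `v` positive on the index range
and zero at `T+1`. Eliminating `ρ` gives the stated `λ`; the roots are non-real as soon as
`(Kβ)² sin² θ ≤ βc`, which holds for large `T`.
-/

open Finset Filter Matrix Real
open scoped Topology ENNReal

section Spectrum

variable {ι : Type*} [Fintype ι]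

lemma Matrix.mulVec_le_mulVec_of_nonneg {B : Matrix ι ι ℝ} (hB : ∀ i j, 0 ≤ B i j)
    {v w : ι → ℝ} (h : v ≤ w) : B *ᵥ v ≤ B *ᵥ w := fun i =>
  Finset.sum_le_sum fun j _ => mul_le_mul_of_nonneg_left (h j) (hB i j)

variable [DecidableEq ι]

lemma Matrix.exists_mulVec_eq_smul_of_mem_spectrum {M : Matrix ι ι ℂ} {μ : ℂ}
    (hμ : μ ∈ spectrum ℂ M) : ∃ x : ι → ℂ, x ≠ 0 ∧ M *ᵥ x = μ • x := by
  rw [← Matrix.spectrum_toLin', ← Module.End.hasEigenvalue_iff_mem_spectrum] at hμ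
  obtain ⟨x, hx⟩ := hμ.exists_hasEigenvector
  exact ⟨x, hx.2, hx.apply_eq_smul⟩

/-- Collatz–Wielandt bound from above. -/
lemma Matrix.norm_le_of_mem_spectrum_of_mulVec_le {B : Matrix ι ι ℝ} (hB : ∀ i j, 0 ≤ B i j)
    {v : ι → ℝ} (hv : ∀ i, 0 < v i) {r : ℝ} (h : B *ᵥ v ≤ r • v) {μ : ℂ}
    (hμ : μ ∈ spectrum ℂ (B.map Complex.ofReal)) : ‖μ‖ ≤ r := by
  obtain ⟨x, hx0, hx⟩ := Matrix.exists_mulVec_eq_smul_of_mem_spectrum hμ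
  obtain ⟨j0, hj0⟩ := Function.ne_iff.mp hx0
  obtain ⟨i0, -, hmax⟩ := Finset.exists_max_image univ (fun i => ‖x i‖ / v i) ⟨j0, mem_univ _⟩
  set m := ‖x i0‖ / v i0
  have hxm : ∀ j, ‖x j‖ ≤ m * v j := fun j =>
    (div_le_iff₀ (hv j)).mp (hmax j (mem_univ _))
  have hm : 0 < m := (div_pos (norm_pos_iff.mpr hj0) (hv j0)).trans_le (hmax j0 (mem_univ _))
  have key : ‖μ‖ * (m * v i0) ≤ r * (m * v i0) := by
    calc ‖μ‖ * (m * v i0) = ‖(B.map Complex.ofReal *ᵥ x) i0‖ := by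
          rw [hx, Pi.smul_apply, smul_eq_mul, norm_mul, div_mul_cancel₀ _ (hv i0).ne']
      _ ≤ ∑ j, B i0 j * ‖x j‖ := by
          refine (norm_sum_le _ _).trans_eq (sum_congr rfl fun j _ => ?_)
          change ‖(B i0 j : ℂ) * x j‖ = _
          rw [norm_mul, Complex.norm_real, Real.norm_of_nonneg (hB i0 j)]
      _ ≤ m * (B *ᵥ v) i0 := by
          rw [Matrix.mulVec, dotProduct, mul_sum]
          exact sum_le_sum fun j _ => by nlinarith [hxm j, hB i0 j]
      _ ≤ m * (r * v i0) := mul_le_mul_of_nonneg_left (h i0) hm.le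
      _ = r * (m * v i0) := mul_left_comm _ _ _
  exact le_of_mul_le_mul_right key (mul_pos hm (hv i0))

lemma Matrix.pow_smul_le_pow_mulVec {B : Matrix ι ι ℝ} (hB : ∀ i j, 0 ≤ B i j) {v : ι → ℝ}
    {r : ℝ} (hr : 0 ≤ r) (h : r • v ≤ B *ᵥ v) (k : ℕ) : r ^ k • v ≤ (B ^ k) *ᵥ v := by
  induction k with
  | zero => simp
  | succ k ih =>
    calc r ^ (k + 1) • v = r ^ k • (r • v) := by rw [pow_succ, mul_smul]
      _ ≤ r ^ k • (B *ᵥ v) := smul_le_smul_of_nonneg_left h (pow_nonneg hr k)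
      _ = B *ᵥ (r ^ k • v) := by rw [Matrix.mulVec_smul]
      _ ≤ B *ᵥ ((B ^ k) *ᵥ v) := Matrix.mulVec_le_mulVec_of_nonneg hB ih
      _ = (B ^ (k + 1)) *ᵥ v := by rw [Matrix.mulVec_mulVec, pow_succ']

end Spectrum

lemma ofReal_le_spectralRadius_of_pow_le_norm_pow {A : Type*} [NormedRing A] [NormedAlgebra ℂ A]
    [CompleteSpace A] (a : A) {r : ℝ} (hr : 0 ≤ r) (h : ∀ k : ℕ, r ^ k ≤ ‖a ^ k‖) :
    ENNReal.ofReal r ≤ spectralRadius ℂ a := by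
  refine ge_of_tendsto (spectrum.pow_nnnorm_pow_one_div_tendsto_nhds_spectralRadius a) ?_
  filter_upwards [eventually_ge_atTop 1] with k hk
  calc ENNReal.ofReal r = ENNReal.ofReal (r ^ k) ^ (1 / (k : ℝ)) := by
        rw [ENNReal.ofReal_pow hr, ← ENNReal.rpow_natCast, ← ENNReal.rpow_mul,
          mul_one_div_cancel (by positivity), ENNReal.rpow_one]
    _ ≤ (‖a ^ k‖₊ : ℝ≥0∞) ^ (1 / (k : ℝ)) := by
        gcongr
        rw [← enorm_eq_nnnorm, ← ofReal_norm]
        exact ENNReal.ofReal_le_ofReal (h k)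

section LinftyOpNorm

attribute [local instance] Matrix.linftyOpNormedRing Matrix.linftyOpNormedAlgebra

variable {ι : Type*} [Fintype ι] [DecidableEq ι] [Nonempty ι]

lemma Matrix.pow_le_norm_map_pow_of_smul_le_mulVec {B : Matrix ι ι ℝ} (hB : ∀ i j, 0 ≤ B i j)
    {v : ι → ℝ} (hv : ∀ i, 0 < v i) {r : ℝ} (hr : 0 ≤ r) (h : r • v ≤ B *ᵥ v) (k : ℕ) :
    r ^ k ≤ ‖B.map Complex.ofReal ^ k‖ := by
  obtain ⟨i0, -, hmax⟩ := exists_max_image univ v univ_nonempty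
  set x : ι → ℂ := fun j => v j
  have hx : ‖x‖ ≤ v i0 := (pi_norm_le_iff_of_nonneg (hv i0).le).mpr fun j => by
    simpa [x, abs_of_pos (hv j)] using hmax j (mem_univ j)
  have hAx : (B.map Complex.ofReal ^ k *ᵥ x) i0 = ((B ^ k *ᵥ v) i0 : ℂ) := by
    change (B.map Complex.ofRealHom ^ k *ᵥ (Complex.ofRealHom ∘ v)) i0 = Complex.ofRealHom _
    rw [← Matrix.map_pow, RingHom.map_mulVec]
  refine le_of_mul_le_mul_right ?_ (hv i0)
  calc r ^ k * v i0 ≤ (B ^ k *ᵥ v) i0 := Matrix.pow_smul_le_pow_mulVec hB hr h k i0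
    _ ≤ ‖(B.map Complex.ofReal ^ k *ᵥ x) i0‖ := by
        rw [hAx, Complex.norm_real, Real.norm_eq_abs]
        exact le_abs_self _
    _ ≤ ‖B.map Complex.ofReal ^ k *ᵥ x‖ := norm_le_pi_norm _ i0
    _ ≤ ‖B.map Complex.ofReal ^ k‖ * ‖x‖ := Matrix.linfty_opNorm_mulVec _ _
    _ ≤ ‖B.map Complex.ofReal ^ k‖ * v i0 := by gcongr

/-- Collatz–Wielandt bound from below, via Gelfand's formula. -/
lemma Matrix.exists_mem_spectrum_le_norm_of_smul_le_mulVec {B : Matrix ι ι ℝ}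
    (hB : ∀ i j, 0 ≤ B i j) {v : ι → ℝ} (hv : ∀ i, 0 < v i) {r : ℝ} (hr : 0 ≤ r)
    (h : r • v ≤ B *ᵥ v) : ∃ μ ∈ spectrum ℂ (B.map Complex.ofReal), r ≤ ‖μ‖ := by
  obtain ⟨μ, hμ, hnorm⟩ := spectrum.exists_nnnorm_eq_spectralRadius (B.map Complex.ofReal)
  refine ⟨μ, hμ, (ENNReal.ofReal_le_ofReal_iff (norm_nonneg μ)).mp ?_⟩
  rw [ofReal_norm, enorm_eq_nnnorm, hnorm]
  exact ofReal_le_spectralRadius_of_pow_le_norm_pow _ hr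
    (B.pow_le_norm_map_pow_of_smul_le_mulVec hB hv hr h)

end LinftyOpNorm

lemma specRad_nonneg {n : ℕ} (A : Matrix (Fin n) (Fin n) ℝ) : 0 ≤ specRad A :=
  Real.sSup_nonneg (by rintro _ ⟨μ, -, rfl⟩; exact norm_nonneg μ)

lemma specRad_le_of_mulVec_le_s11 {n : ℕ} {B : Matrix (Fin n) (Fin n) ℝ} (hB : ∀ i j, 0 ≤ B i j)
    {v : Fin n → ℝ} (hv : ∀ i, 0 < v i) {r : ℝ} (hr : 0 ≤ r) (h : B *ᵥ v ≤ r • v) :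
    specRad B ≤ r :=
  Real.sSup_le
    (by rintro _ ⟨μ, hμ, rfl⟩; exact B.norm_le_of_mem_spectrum_of_mulVec_le hB hv h hμ) hr

lemma le_specRad_of_smul_le_mulVec {n : ℕ} [NeZero n] {B : Matrix (Fin n) (Fin n) ℝ}
    (hB : ∀ i j, 0 ≤ B i j) {v : Fin n → ℝ} (hv : ∀ i, 0 < v i) {r : ℝ} (h : r • v ≤ B *ᵥ v) :
    r ≤ specRad B := by
  rcases le_or_gt r 0 with hr | hr
  · exact hr.trans (specRad_nonneg B)
  obtain ⟨μ, hμ, hle⟩ := B.exists_mem_spectrum_le_norm_of_smul_le_mulVec hB hv hr.le h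
  obtain ⟨C, hC⟩ := ((Matrix.finite_spectrum (B.map Complex.ofReal)).image (‖·‖)).bddAbove
  have hbdd : BddAbove {x : ℝ | ∃ μ : ℂ, μ ∈ spectrum ℂ (B.map Complex.ofReal) ∧ x = ‖μ‖} :=
    ⟨C, by rintro _ ⟨μ, hμ, rfl⟩; exact hC ⟨μ, hμ, rfl⟩⟩
  exact hle.trans (le_csSup hbdd ⟨μ, hμ, rfl⟩)

lemma cos_pi_div_nat_add_two_nonneg (T : ℕ) : 0 ≤ cos (π / ((T : ℝ) + 2)) := by
  have hT : (0 : ℝ) < T + 2 := by positivity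
  refine cos_nonneg_of_mem_Icc ⟨by linarith [pi_pos, div_pos pi_pos hT], ?_⟩
  exact div_le_div_of_nonneg_left pi_pos.le two_pos (by linarith)

lemma pow_mul_sin_recurrence (ρ θ : ℝ) (k : ℕ) :
    ρ ^ (k + 2) * sin ((k + 2 : ℕ) * θ)
      = 2 * ρ * cos θ * (ρ ^ (k + 1) * sin ((k + 1 : ℕ) * θ)) - ρ ^ 2 * (ρ ^ k * sin (k * θ)) := by
  have hadd := sin_add ((k + 1 : ℕ) * θ) θ
  have hsub := sin_sub ((k + 1 : ℕ) * θ) θ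
  push_cast at hadd hsub ⊢
  rw [show ((k : ℝ) + 1) * θ + θ = (k + 2) * θ by ring] at hadd
  rw [show ((k : ℝ) + 1) * θ - θ = k * θ by ring] at hsub
  rw [hadd, hsub]
  ring

def geomHessenberg (β c K : ℝ) (T : ℕ) : Matrix (Fin (T + 1)) (Fin (T + 1)) ℝ :=
  fun i j => if (j : ℕ) = i + 1 then β else if (j : ℕ) < i then c * K ^ ((i : ℕ) - j - 1) else 0

lemma BT_eq_geomHessenberg (L1 K1 rho β : ℝ) (T : ℕ) :
    BT L1 K1 rho β T = geomHessenberg β (Lbar L1 K1 β * K1 / rho) (Kbar L1 K1 rho β) T := rfl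

def geomConv (K : ℝ) (f : ℕ → ℝ) (m : ℕ) : ℝ := ∑ k ∈ range m, K ^ (m - k - 1) * f k

lemma geomConv_pow_mul_sub (K t : ℝ) (m : ℕ) :
    geomConv K (t ^ ·) m * (t - K) = t ^ m - K ^ m := by
  rw [← geom_sum₂_mul, geomConv]
  congr 1
  refine sum_congr rfl fun k _ => ?_
  rw [mul_comm, Nat.sub_right_comm]

section GeomHessenberg

variable {β c K : ℝ}

lemma geomConv_succ (f : ℕ → ℝ) (m : ℕ) :
    geomConv K f (m + 1) = K * geomConv K f m + f m := by
  rw [geomConv, geomConv, sum_range_succ, mul_sum, Nat.add_sub_cancel_left, Nat.sub_self,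
    pow_zero, one_mul]
  congr 1
  refine sum_congr rfl fun k hk => ?_
  rw [← mul_assoc, ← pow_succ', show m + 1 - k - 1 = m - k - 1 + 1 by
    have := mem_range.mp hk; omega]

lemma geomHessenberg_mulVec_apply (T : ℕ) (f : ℕ → ℝ) (i : Fin (T + 1)) :
    (geomHessenberg β c K T *ᵥ fun j => f j) i
      = (if (i : ℕ) < T then β * f (i + 1) else 0) + c * geomConv K f i := by
  have hsplit : ∀ m : ℕ, (if m = i + 1 then β else if m < i then c * K ^ ((i : ℕ) - m - 1)
      else 0) * f m
      = (if m = i + 1 then β * f m else 0) + (if m < i then c * (K ^ ((i : ℕ) - m - 1) * f m)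
      else 0) := fun m => by
    split_ifs <;> first | omega | ring
  simp only [mulVec, dotProduct, geomHessenberg]
  rw [Fin.sum_univ_eq_sum_range (fun m => (if m = i + 1 then β else if m < i then
    c * K ^ ((i : ℕ) - m - 1) else 0) * f m), sum_congr rfl fun m _ => hsplit m,
    sum_add_distrib, sum_ite_eq', ← sum_filter, geomConv, mul_sum]
  congr 1
  · simp only [mem_range, add_lt_add_iff_right]
  · congr 1
    ext m
    simp only [mem_filter, mem_range]
    omega

lemma geomHessenberg_nonneg (T : ℕ) (hβ : 0 ≤ β) (hc : 0 ≤ c) (hK : 0 ≤ K) (i j : Fin (T + 1)) :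
    0 ≤ geomHessenberg β c K T i j := by
  unfold geomHessenberg
  split_ifs <;> positivity

lemma geomHessenberg_mulVec_pow_le (T : ℕ) (hβ : 0 ≤ β) (hc : 0 ≤ c) (hK : 0 ≤ K) {u : ℝ}
    (hu : 0 < u) :
    geomHessenberg β c K T *ᵥ (fun j => (K + u) ^ (j : ℕ))
      ≤ (K * β + β * u + c / u) • fun j : Fin (T + 1) => (K + u) ^ (j : ℕ) := by
  intro i
  have hconv : geomConv K ((K + u) ^ ·) i ≤ (K + u) ^ (i : ℕ) / u := by
    have := geomConv_pow_mul_sub K (K + u) i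
    rw [add_sub_cancel_left] at this
    rw [le_div_iff₀ hu, this]
    linarith [pow_nonneg hK i]
  have hsuper : (if (i : ℕ) < T then β * (K + u) ^ ((i : ℕ) + 1) else 0)
      ≤ β * (K + u) ^ ((i : ℕ) + 1) := by
    split_ifs
    exacts [le_rfl, by positivity]
  calc (geomHessenberg β c K T *ᵥ (fun j => (K + u) ^ (j : ℕ))) i
      = (if (i : ℕ) < T then β * (K + u) ^ ((i : ℕ) + 1) else 0)
          + c * geomConv K ((K + u) ^ ·) i := geomHessenberg_mulVec_apply T ((K + u) ^ ·) i
    _ ≤ β * (K + u) ^ ((i : ℕ) + 1) + c * ((K + u) ^ (i : ℕ) / u) :=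
        add_le_add hsuper (mul_le_mul_of_nonneg_left hconv hc)
    _ = (K * β + β * u + c / u) * (K + u) ^ (i : ℕ) := by
        rw [pow_succ]
        field_simp

lemma specRad_geomHessenberg_le (T : ℕ) (hβ : 0 < β) (hc : 0 < c) (hK : 0 ≤ K) :
    specRad (geomHessenberg β c K T) ≤ K * β + 2 * √(β * c) := by
  have hs : 0 < √(β * c) := sqrt_pos.mpr (mul_pos hβ hc)
  have hs2 : √(β * c) ^ 2 = β * c := sq_sqrt (mul_pos hβ hc).le
  have hu : 0 < √(β * c) / β := div_pos hs hβ
  have hr : K * β + β * (√(β * c) / β) + c / (√(β * c) / β) = K * β + 2 * √(β * c) := by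
    field_simp
    linear_combination (-1) * hs2
  refine specRad_le_of_mulVec_le_s11 (geomHessenberg_nonneg T hβ.le hc.le hK)
    (v := fun j => (K + √(β * c) / β) ^ (j : ℕ)) (fun j => by positivity) (by positivity) ?_
  rw [← hr]
  exact geomHessenberg_mulVec_pow_le T hβ.le hc.le hK hu

lemma geomConv_eq_of_recurrence {f : ℕ → ℝ} {r : ℝ} (h0 : β * f 1 = (r + K * β) * f 0)
    (hrec : ∀ k, β * f (k + 2) = (r + K * β) * f (k + 1) - (K * r + c) * f k) (m : ℕ) :
    c * geomConv K f m = r * f m - β * f (m + 1) + K ^ (m + 1) * β * f 0 := by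
  induction m with
  | zero =>
    simp only [geomConv, range_zero, sum_empty, mul_zero, zero_add, pow_one]
    linear_combination h0
  | succ m ih =>
    rw [geomConv_succ]
    linear_combination K * ih + hrec m

lemma smul_le_geomHessenberg_mulVec_of_recurrence (T : ℕ) (hβ : 0 ≤ β) (hK : 0 ≤ K)
    {f : ℕ → ℝ} {r : ℝ} (h0 : β * f 1 = (r + K * β) * f 0)
    (hrec : ∀ k, β * f (k + 2) = (r + K * β) * f (k + 1) - (K * r + c) * f k)
    (hf0 : 0 ≤ f 0) (hfT : f (T + 1) = 0) :
    r • (fun j : Fin (T + 1) => f j) ≤ geomHessenberg β c K T *ᵥ fun j => f j := by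
  intro i
  rw [Pi.smul_apply, smul_eq_mul, geomHessenberg_mulVec_apply, geomConv_eq_of_recurrence h0 hrec]
  have hboundary : 0 ≤ K ^ ((i : ℕ) + 1) * β * f 0 := by positivity
  split_ifs with hi
  · linarith
  · have hfi : f ((i : ℕ) + 1) = 0 := by rw [show (i : ℕ) + 1 = T + 1 by omega, hfT]
    rw [hfi]
    linarith

lemma le_specRad_geomHessenberg_of_sin (T : ℕ) (hβ : 0 < β) (hc : 0 ≤ c) (hK : 0 ≤ K)
    {r ρ : ℝ} (hρ : 0 < ρ) (h1 : 2 * β * ρ * cos (π / ((T : ℝ) + 2)) = r + K * β)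
    (h2 : β * ρ ^ 2 = K * r + c) :
    r ≤ specRad (geomHessenberg β c K T) := by
  set θ := π / ((T : ℝ) + 2) with hθ
  set g : ℕ → ℝ := fun k => ρ ^ k * sin (k * θ)
  have hgrec : ∀ k, g (k + 2) = 2 * ρ * cos θ * g (k + 1) - ρ ^ 2 * g k :=
    pow_mul_sin_recurrence ρ θ
  have hg0 : g 0 = 0 := by simp [g]
  have hgT : g (T + 2) = 0 := by
    have hπ : ((T + 2 : ℕ) : ℝ) * θ = π := by
      rw [hθ]
      push_cast
      field_simp
    simp only [g, hπ, sin_pi, mul_zero]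
  have hgpos : ∀ j : Fin (T + 1), 0 < g (j + 1) := fun j => by
    have hj : ((j + 1 : ℕ) : ℝ) < T + 2 := by exact_mod_cast (by omega : (j : ℕ) + 1 < T + 2)
    refine mul_pos (pow_pos hρ _) (sin_pos_of_pos_of_lt_pi (by positivity) ?_)
    calc ((j + 1 : ℕ) : ℝ) * θ < (T + 2) * θ := by gcongr
      _ = π := by rw [hθ]; field_simp
  refine le_specRad_of_smul_le_mulVec (geomHessenberg_nonneg T hβ.le hc hK)
    (v := fun j => g (j + 1)) hgpos ?_
  refine smul_le_geomHessenberg_mulVec_of_recurrence (f := fun k => g (k + 1)) T hβ.le hK ?_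
    (fun k => ?_) (hgpos 0).le hgT
  · linear_combination β * hgrec 0 + g 1 * h1 - β * ρ ^ 2 * hg0
  · linear_combination β * hgrec (k + 1) + g (k + 2) * h1 - g (k + 1) * h2

lemma le_specRad_geomHessenberg (T : ℕ) (hβ : 0 < β) (hc : 0 < c) (hK : 0 ≤ K)
    (hdisc : (K * β) ^ 2 * sin (π / ((T : ℝ) + 2)) ^ 2 ≤ β * c) :
    2 * K * β * cos (π / ((T : ℝ) + 2)) ^ 2 - K * β
        + 2 * cos (π / ((T : ℝ) + 2)) * √(β * c - (K * β) ^ 2 * sin (π / ((T : ℝ) + 2)) ^ 2)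
      ≤ specRad (geomHessenberg β c K T) := by
  set θ := π / ((T : ℝ) + 2)
  set w := √(β * c - (K * β) ^ 2 * sin θ ^ 2)
  set r := 2 * K * β * cos θ ^ 2 - K * β + 2 * cos θ * w with hr_def
  rcases le_or_gt r 0 with hr | hr
  · exact hr.trans (specRad_nonneg _)
  have hw2 : w ^ 2 = β * c - (K * β) ^ 2 * sin θ ^ 2 := sq_sqrt (by linarith)
  have hq : 0 < K * r + c := by positivity
  set ρ := √((K * r + c) / β)
  have hρ : 0 < ρ := sqrt_pos.mpr (div_pos hq hβ)
  have h2 : β * ρ ^ 2 = K * r + c := by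
    rw [sq_sqrt (div_pos hq hβ).le]
    field_simp
  have h1 : 2 * β * ρ * cos θ = r + K * β := by
    have hcos := cos_pi_div_nat_add_two_nonneg T
    refine (pow_left_inj₀ (by positivity) (by positivity) two_ne_zero).mp ?_
    calc (2 * β * ρ * cos θ) ^ 2 = 4 * β * cos θ ^ 2 * (β * ρ ^ 2) := by ring
      _ = (r + K * β) ^ 2 := by
        rw [h2, hr_def]
        linear_combination (-4 * cos θ ^ 2) * hw2
          + (4 * cos θ ^ 2 * (K * β) ^ 2) * sin_sq_add_cos_sq θ
  exact le_specRad_geomHessenberg_of_sin T hβ hc.le hK hρ h1 h2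

end GeomHessenberg

lemma half_mul_sqrt_discr_eq (K β b θ : ℝ) (hθ : 0 ≤ cos θ) :
    1 / 2 * √((4 * K * β * cos θ ^ 2 - 2 * K * β) ^ 2 - 4 * ((K * β) ^ 2 - 4 * b * cos θ ^ 2))
      = 2 * cos θ * √(b - (K * β) ^ 2 * sin θ ^ 2) := by
  rw [show (4 * K * β * cos θ ^ 2 - 2 * K * β) ^ 2 - 4 * ((K * β) ^ 2 - 4 * b * cos θ ^ 2)
      = (4 * cos θ) ^ 2 * (b - (K * β) ^ 2 * sin θ ^ 2) by rw [sin_sq]; ring,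
    sqrt_mul (sq_nonneg _), sqrt_sq (by positivity)]
  ring

lemma eventually_mul_sin_sq_pi_div_le (a : ℝ) {b : ℝ} (hb : 0 < b) :
    ∀ᶠ T : ℕ in atTop, a * sin (π / ((T : ℝ) + 2)) ^ 2 ≤ b := by
  have hθ : Tendsto (fun T : ℕ => π / ((T : ℝ) + 2)) atTop (𝓝 0) :=
    tendsto_const_nhds.div_atTop
      (tendsto_atTop_add_const_right _ 2 (tendsto_natCast_atTop_atTop (R := ℝ)))
  have hlim : Tendsto (fun T : ℕ => a * sin (π / ((T : ℝ) + 2)) ^ 2) atTop (𝓝 0) := by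
    simpa using ((continuous_sin.tendsto 0).comp hθ).pow 2 |>.const_mul a
  exact (hlim.eventually_lt_const hb).mono fun _ => le_of_lt

theorem stmt11_general (L1 K1 rho β : ℝ)
    (hL1 : 0 < L1) (hK1 : 0 < K1) (hrho : 0 < rho)
    (hβ0 : 0 < β) (hβK : β * K1 < 2)
    (hKbar0 : 0 < Kbar L1 K1 rho β) :
    ∃ T0 : ℕ, ∀ T : ℕ, T0 ≤ T →
      Kbar L1 K1 rho β * β + 2 * Real.sqrt (β * Lbar L1 K1 β * K1 / rho)
        ≥ specRad (BT L1 K1 rho β T)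
      ∧ specRad (BT L1 K1 rho β T)
        ≥ (2 * Kbar L1 K1 rho β * β * (Real.cos (Real.pi / ((T : ℝ) + 2))) ^ 2
              - Kbar L1 K1 rho β * β)
          + (1 / 2) * Real.sqrt
              ((4 * Kbar L1 K1 rho β * β * (Real.cos (Real.pi / ((T : ℝ) + 2))) ^ 2
                  - 2 * Kbar L1 K1 rho β * β) ^ 2
                - 4 * ((Kbar L1 K1 rho β * β) ^ 2
                    - 4 * (β * Lbar L1 K1 β * K1 / rho)
                      * (Real.cos (Real.pi / ((T : ℝ) + 2))) ^ 2)) := by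
  have hc : 0 < Lbar L1 K1 β * K1 / rho := by
    have : 0 < 1 - β * K1 / 2 := by linarith
    unfold Lbar
    positivity
  have hb : β * Lbar L1 K1 β * K1 / rho = β * (Lbar L1 K1 β * K1 / rho) := by ring
  obtain ⟨T0, hT0⟩ := eventually_atTop.mp
    (eventually_mul_sin_sq_pi_div_le ((Kbar L1 K1 rho β * β) ^ 2) (mul_pos hβ0 hc))
  refine ⟨T0, fun T hT => ⟨?_, ?_⟩⟩
  · rw [hb, BT_eq_geomHessenberg]
    exact specRad_geomHessenberg_le T hβ0 hc hKbar0.le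
  · rw [hb, BT_eq_geomHessenberg,
      half_mul_sqrt_discr_eq _ _ _ _ (cos_pi_div_nat_add_two_nonneg T)]
    exact le_specRad_geomHessenberg T hβ0 hc hKbar0.le (hT0 T hT)

/-- Asymptotic two-sided bound on `ρ(B_T)` (Theorem 3.12). -/
theorem stmt11 (L1 K1 rho β : ℝ)
    (hL1 : 0 < L1) (hK1 : 0 < K1) (hrho : 0 < rho)
    (hβ0 : 0 < β) (hβ1 : β < 1) (hβK : β * K1 < 2)
    (hKbar0 : 0 < Kbar L1 K1 rho β) (hKbar1 : Kbar L1 K1 rho β < 1) :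
    ∃ T0 : ℕ, ∀ T : ℕ, T0 ≤ T →
      Kbar L1 K1 rho β * β + 2 * Real.sqrt (β * Lbar L1 K1 β * K1 / rho)
        ≥ specRad (BT L1 K1 rho β T)
      ∧ specRad (BT L1 K1 rho β T)
        ≥ (2 * Kbar L1 K1 rho β * β * (Real.cos (Real.pi / ((T : ℝ) + 2))) ^ 2
              - Kbar L1 K1 rho β * β)
          + (1 / 2) * Real.sqrt
              ((4 * Kbar L1 K1 rho β * β * (Real.cos (Real.pi / ((T : ℝ) + 2))) ^ 2
                  - 2 * Kbar L1 K1 rho β * β) ^ 2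
                - 4 * ((Kbar L1 K1 rho β * β) ^ 2
                    - 4 * (β * Lbar L1 K1 β * K1 / rho)
                      * (Real.cos (Real.pi / ((T : ℝ) + 2))) ^ 2)) :=
  stmt11_general L1 K1 rho β hL1 hK1 hrho hβ0 hβK hKbar0
end

section
/- Let β, K̄, L̄, K₁, ρ be positive real numbers and set K̂ = K̄ + L̄K₁/ρ. Then K̄β + 2√(β·L̄K₁/ρ) ≤ 1 if and only if √(K̂β) + √((K̂ − K̄)·β) ≤ 1. -/
/-- Equivalence of the two contraction conditions (Proposition 3.13):
`K̄β + 2√(β L̄ K₁ / ρ) ≤ 1 ↔ √(K̂β) + √((K̂ - K̄)β) ≤ 1`, where `K̂ = K̄ + L̄K₁/ρ`. -/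
theorem stmt12 (β Kb Lb K1 rho : ℝ)
    (hβ : 0 < β) (hKb : 0 < Kb) (hLb : 0 < Lb) (hK1 : 0 < K1) (hrho : 0 < rho) :
    Kb * β + 2 * Real.sqrt (β * Lb * K1 / rho) ≤ 1 ↔
      Real.sqrt ((Kb + Lb * K1 / rho) * β)
        + Real.sqrt (((Kb + Lb * K1 / rho) - Kb) * β) ≤ 1 := by
  set a : ℝ := Kb * β with ha
  set b : ℝ := β * Lb * K1 / rho with hb
  have hapos : 0 < a := by positivity
  have hbpos : 0 < b := by positivity
  have e1 : ((Kb + Lb * K1 / rho) - Kb) * β = b := by rw [hb]; ring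
  have e2 : (Kb + Lb * K1 / rho) * β = a + b := by rw [ha, hb]; ring
  rw [e1, e2]
  set s : ℝ := Real.sqrt b with hs
  set t : ℝ := Real.sqrt (a + b) with ht
  have hs0 : 0 ≤ s := Real.sqrt_nonneg _
  have ht0 : 0 ≤ t := Real.sqrt_nonneg _
  have hs2 : s ^ 2 = b := Real.sq_sqrt hbpos.le
  have ht2 : t ^ 2 = a + b := Real.sq_sqrt (by positivity)
  constructor
  · intro h
    nlinarith [sq_nonneg (t - (1 - s)), sq_nonneg (t + s - 1)]
  · intro h
    nlinarith [sq_nonneg (t - s), sq_nonneg (t + s)]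
end

section
/- Let 0 < β < 1, a > 0 and K̄ > 0 be real numbers. Define the one-sided infinite Toeplitz operator 𝒜 on the Banach space ℓ∞ of bounded sequences u = (u₁, u₂, …) by (𝒜u)₁ = Σ_{j≥1} a·β^j·u_j and, for i ≥ 2, (𝒜u)_i = (K̄ + a)·u_{i−1} + Σ_{j≥i} a·β^{j−i+1}·u_j. Then 𝒜 is a well-defined bounded linear operator on ℓ∞, and its spectral radius equals K̄ + a/(1 − β). -/
/-!
Write `r = K̄ + a / (1 - β)`. The operator is given by a nonnegative matrix whose row sums are
`a β / (1 - β)` for the first row and `r` for all others, so its norm on `ℓ∞` is at most `r`,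
which bounds the spectral radius from above.

For the lower bound, row `i ≥ 1` is supported on the columns `j ≥ i - 1`, so by induction
`(𝒜ⁿ 𝟙)_j ≥ rⁿ` for `j ≥ n`. For `s > r` the Neumann series `(s - 𝒜)⁻¹ = Σ s⁻ⁿ⁻¹ 𝒜ⁿ` has
nonnegative coordinates on `𝟙`, whence `((s - 𝒜)⁻¹ 𝟙)_j ≥ Σ_{n<j} rⁿ / sⁿ⁺¹` and
`‖(s - 𝒜)⁻¹‖ ≥ 1 / (s - r)`. The resolvent thus blows up as `s ↓ r`, which cannot happen at a
point of the resolvent set, where it is continuous; hence `r ∈ σ(𝒜)`.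
-/

open Filter Topology
open scoped ENNReal

section Resolvent

variable {𝕜 A : Type*} [NontriviallyNormedField 𝕜] [NormedRing A] [NormedAlgebra 𝕜 A]
  [CompleteSpace A]

theorem spectrum.hasSum_resolvent {a : A} {s : 𝕜} (h : ‖a‖ < ‖s‖) :
    HasSum (fun n : ℕ => s⁻¹ ^ (n + 1) • a ^ n) (resolvent a s) := by
  have hs : s ≠ 0 := norm_pos_iff.mp ((norm_nonneg a).trans_lt h)
  have hlt : ‖s⁻¹ • a‖ < 1 :=
    calc ‖s⁻¹ • a‖ ≤ ‖s⁻¹‖ * ‖a‖ := norm_smul_le _ _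
      _ < 1 := by rwa [norm_inv, inv_mul_lt_iff₀ (norm_pos_iff.mpr hs), mul_one]
  have hres : resolvent a s = s⁻¹ • Ring.inverse (1 - s⁻¹ • a) := by
    have h := spectrum.units_smul_resolvent_self (r := Units.mk0 s hs) (a := a)
    simp only [Units.smul_def, Units.val_inv_eq_inv_val, Units.val_mk0, resolvent, map_one] at h
    rw [resolvent, ← h, smul_smul, inv_mul_cancel₀ hs, one_smul]
  rw [hres]
  convert (hasSum_geom_series_inverse _ hlt).const_smul s⁻¹ using 2 with n
  rw [smul_pow, smul_smul, pow_succ']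

theorem spectrum.mem_of_tendsto_norm_resolvent {a : A} {r : 𝕜} {l : Filter 𝕜} [l.NeBot]
    (hl : l ≤ 𝓝 r) (h : Tendsto (fun s => ‖resolvent a s‖) l atTop) : r ∈ spectrum 𝕜 a := by
  by_contra hr
  have hcont := (spectrum.hasDerivAt_resolvent_const_left (spectrum.notMem_iff.mp hr)).continuousAt
  exact not_tendsto_atTop_of_tendsto_nhds (hcont.norm.mono_left hl) h

end Resolvent

theorem lp.hasSum_apply {ι α : Type*} {E : α → Type*} [∀ i, NormedAddCommGroup (E i)]
    {p : ℝ≥0∞} [Fact (1 ≤ p)] {f : ι → lp E p} {x : lp E p} (h : HasSum f x) (i : α) :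
    HasSum (fun n => f n i) (x i) :=
  Pi.hasSum.mp (h.map (lp.coeFnAddMonoidHom E p)
    (continuous_pi fun i => (lp.lipschitzWith_one_eval p i).continuous)) i

theorem tendsto_inv_sub_nhdsGT (r : ℝ) : Tendsto (fun s => (s - r)⁻¹) (𝓝[>] r) atTop :=
  Tendsto.inv_tendsto_nhdsGT_zero <|
    tendsto_nhdsWithin_of_tendsto_nhds_of_eventually_within _
      (tendsto_sub_nhds_zero_iff.mpr (tendsto_id.mono_left nhdsWithin_le_nhds))
      (eventually_nhdsWithin_of_forall fun _ hs => Set.mem_Ioi.mpr (sub_pos.mpr hs))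

section InftyMatrix

variable {ι κ : Type*} [Nonempty κ] {c : κ → ι → ℝ} {M : ℝ}

theorem norm_mul_lp_apply_le (x : ℝ) (u : lp (fun _ : ι => ℝ) ∞) (j : ι) :
    ‖x * u j‖ ≤ ‖x‖ * ‖u‖ :=
  (norm_mul_le _ _).trans
    (mul_le_mul_of_nonneg_left (lp.norm_apply_le_norm ENNReal.top_ne_zero u j) (norm_nonneg x))

theorem summable_mul_lp {f : ι → ℝ} (hf : Summable fun j => ‖f j‖)
    (u : lp (fun _ : ι => ℝ) ∞) : Summable fun j => f j * u j :=
  (hf.mul_right ‖u‖).of_norm_bounded fun j => norm_mul_lp_apply_le (f j) u j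

theorem norm_tsum_mul_lp_le {f : ι → ℝ} (hf : Summable fun j => ‖f j‖) (hM : ∑' j, ‖f j‖ ≤ M)
    (u : lp (fun _ : ι => ℝ) ∞) : ‖∑' j, f j * u j‖ ≤ M * ‖u‖ :=
  (tsum_of_norm_bounded (hf.hasSum.mul_right ‖u‖) fun j => norm_mul_lp_apply_le (f j) u j).trans
    (mul_le_mul_of_nonneg_right hM (norm_nonneg u))

noncomputable def lpInftyMatrixCLM (c : κ → ι → ℝ) (M : ℝ)
    (hc : ∀ i, Summable fun j => ‖c i j‖) (hM : ∀ i, ∑' j, ‖c i j‖ ≤ M) :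
    lp (fun _ : ι => ℝ) ∞ →L[ℝ] lp (fun _ : κ => ℝ) ∞ :=
  LinearMap.mkContinuous
    { toFun u := ⟨fun i => ∑' j, c i j * u j, memℓp_infty ⟨M * ‖u‖, by
        rintro - ⟨i, rfl⟩; exact norm_tsum_mul_lp_le (hc i) (hM i) u⟩⟩
      map_add' u v := by
        ext i
        simp only [lp.coeFn_add, Pi.add_apply, mul_add]
        exact (summable_mul_lp (hc i) u).tsum_add (summable_mul_lp (hc i) v)
      map_smul' t u := by
        ext i
        simp only [lp.coeFn_smul, Pi.smul_apply, smul_eq_mul, RingHom.id_apply, mul_left_comm _ t,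
          tsum_mul_left] }
    M fun u => lp.norm_le_of_forall_le' _ fun i => norm_tsum_mul_lp_le (hc i) (hM i) u

theorem lpInftyMatrixCLM_apply (hc : ∀ i, Summable fun j => ‖c i j‖) (hM : ∀ i, ∑' j, ‖c i j‖ ≤ M)
    (u : lp (fun _ : ι => ℝ) ∞) (i : κ) :
    lpInftyMatrixCLM c M hc hM u i = ∑' j, c i j * u j :=
  rfl

theorem norm_lpInftyMatrixCLM_le (hc : ∀ i, Summable fun j => ‖c i j‖)
    (hM : ∀ i, ∑' j, ‖c i j‖ ≤ M) : ‖lpInftyMatrixCLM c M hc hM‖ ≤ M :=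
  ContinuousLinearMap.opNorm_le_bound _
    ((tsum_nonneg fun _ => norm_nonneg _).trans (hM (Classical.arbitrary κ))) fun u =>
      lp.norm_le_of_forall_le' _ fun i => norm_tsum_mul_lp_le (hc i) (hM i) u

theorem lpInftyMatrixCLM_apply_nonneg (hc : ∀ i, Summable fun j => ‖c i j‖)
    (hM : ∀ i, ∑' j, ‖c i j‖ ≤ M) (hc0 : ∀ i j, 0 ≤ c i j) {u : lp (fun _ : ι => ℝ) ∞}
    (hu : ∀ j, 0 ≤ u j) (i : κ) : 0 ≤ lpInftyMatrixCLM c M hc hM u i :=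
  tsum_nonneg fun j => mul_nonneg (hc0 i j) (hu j)

theorem mul_le_lpInftyMatrixCLM_apply (hc : ∀ i, Summable fun j => ‖c i j‖)
    (hM : ∀ i, ∑' j, ‖c i j‖ ≤ M) {i : κ} (hc0 : ∀ j, 0 ≤ c i j) {ρ m : ℝ}
    (hρ : HasSum (c i) ρ) {u : lp (fun _ : ι => ℝ) ∞} (hu : ∀ j, c i j ≠ 0 → m ≤ u j) :
    ρ * m ≤ lpInftyMatrixCLM c M hc hM u i := by
  refine hasSum_le (fun j => ?_) (hρ.mul_right m) (summable_mul_lp (hc i) u).hasSum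
  by_cases hij : c i j = 0
  · simp [hij]
  · exact mul_le_mul_of_nonneg_left (hu j hij) (hc0 j)

end InftyMatrix

section Toeplitz

variable {β a Kb : ℝ}

def toeplitzKernel (β a Kb : ℝ) (i j : ℕ) : ℝ :=
  (if j + 1 = i then Kb + a else 0) + if i ≤ j then a * β ^ (j - i + 1) else 0

theorem toeplitzKernel_nonneg (hβ0 : 0 ≤ β) (ha : 0 ≤ a) (hKb : 0 ≤ Kb) (i j : ℕ) :
    0 ≤ toeplitzKernel β a Kb i j := by
  unfold toeplitzKernel
  split_ifs <;> positivity

theorem toeplitzKernel_eq_zero_of_add_one_lt {i j : ℕ} (h : j + 1 < i) :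
    toeplitzKernel β a Kb i j = 0 := by
  simp [toeplitzKernel, h.ne, (h.trans' (Nat.lt_succ_self j)).not_ge]

theorem hasSum_ite_le_mul_pow (hβ0 : 0 ≤ β) (hβ1 : β < 1) (a : ℝ) (i : ℕ) :
    HasSum (fun j => if i ≤ j then a * β ^ (j - i + 1) else 0) (a * β / (1 - β)) := by
  refine ((add_left_injective i).hasSum_iff fun j hj => ?_).mp ?_
  · rw [if_neg]
    rintro hij
    exact hj ⟨j - i, Nat.sub_add_cancel hij⟩
  · have hterm : (fun j => if i ≤ j then a * β ^ (j - i + 1) else 0) ∘ (· + i) =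
        fun k => a * β * β ^ k := by
      funext k
      simp only [Function.comp_apply, Nat.le_add_left, if_true, Nat.add_sub_cancel]
      ring
    rw [hterm, div_eq_mul_inv]
    exact (hasSum_geometric_of_lt_one hβ0 hβ1).mul_left (a * β)

theorem hasSum_toeplitzKernel_zero (hβ0 : 0 ≤ β) (hβ1 : β < 1) :
    HasSum (toeplitzKernel β a Kb 0) (a * β / (1 - β)) := by
  convert hasSum_ite_le_mul_pow hβ0 hβ1 a 0 using 1
  ext j
  simp [toeplitzKernel]

theorem hasSum_toeplitzKernel_succ (hβ0 : 0 ≤ β) (hβ1 : β < 1) (i : ℕ) :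
    HasSum (toeplitzKernel β a Kb (i + 1)) (Kb + a / (1 - β)) := by
  have h1β : 1 - β ≠ 0 := (sub_pos.mpr hβ1).ne'
  convert (hasSum_ite_eq i (Kb + a)).add (hasSum_ite_le_mul_pow hβ0 hβ1 a (i + 1)) using 1
  · ext j
    simp [toeplitzKernel]
  · field_simp
    ring

theorem exists_hasSum_toeplitzKernel_le (hβ0 : 0 ≤ β) (hβ1 : β < 1) (ha : 0 ≤ a) (hKb : 0 ≤ Kb)
    (i : ℕ) :
    ∃ ρ ≤ Kb + a / (1 - β), HasSum (toeplitzKernel β a Kb i) ρ := by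
  cases i with
  | zero =>
    refine ⟨_, ?_, hasSum_toeplitzKernel_zero hβ0 hβ1⟩
    calc a * β / (1 - β) ≤ a / (1 - β) :=
          div_le_div_of_nonneg_right (mul_le_of_le_one_right ha hβ1.le) (sub_pos.mpr hβ1).le
      _ ≤ Kb + a / (1 - β) := le_add_of_nonneg_left hKb
  | succ i => exact ⟨_, le_rfl, hasSum_toeplitzKernel_succ hβ0 hβ1 i⟩

theorem norm_toeplitzKernel (hβ0 : 0 ≤ β) (ha : 0 ≤ a) (hKb : 0 ≤ Kb) (i j : ℕ) :
    ‖toeplitzKernel β a Kb i j‖ = toeplitzKernel β a Kb i j :=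
  Real.norm_of_nonneg (toeplitzKernel_nonneg hβ0 ha hKb i j)

noncomputable def toeplitzOp (hβ0 : 0 ≤ β) (hβ1 : β < 1) (ha : 0 ≤ a) (hKb : 0 ≤ Kb) :
    lp (fun _ : ℕ => ℝ) ∞ →L[ℝ] lp (fun _ : ℕ => ℝ) ∞ :=
  lpInftyMatrixCLM (toeplitzKernel β a Kb) (Kb + a / (1 - β))
    (fun i => by
      obtain ⟨ρ, -, hρ⟩ := exists_hasSum_toeplitzKernel_le hβ0 hβ1 ha hKb i
      simpa only [norm_toeplitzKernel hβ0 ha hKb] using hρ.summable)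
    (fun i => by
      obtain ⟨ρ, hρr, hρ⟩ := exists_hasSum_toeplitzKernel_le hβ0 hβ1 ha hKb i
      simpa only [norm_toeplitzKernel hβ0 ha hKb, hρ.tsum_eq] using hρr)

variable (hβ0 : 0 ≤ β) (hβ1 : β < 1) (ha : 0 ≤ a) (hKb : 0 ≤ Kb)

theorem toeplitzOp_apply_zero (u : lp (fun _ : ℕ => ℝ) ∞) :
    toeplitzOp hβ0 hβ1 ha hKb u 0 = ∑' j, a * β ^ (j + 1) * u j := by
  simp [toeplitzOp, lpInftyMatrixCLM_apply, toeplitzKernel]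

theorem toeplitzOp_apply_succ (u : lp (fun _ : ℕ => ℝ) ∞) (i : ℕ) :
    toeplitzOp hβ0 hβ1 ha hKb u (i + 1) = (Kb + a) * u i +
      ∑' j, if i + 1 ≤ j then a * β ^ (j - (i + 1) + 1) * u j else 0 := by
  have hsub : Summable fun j => (if j = i then Kb + a else 0) * u j :=
    (hasSum_single i fun j hj => by simp [hj]).summable
  have htail : Summable fun j => (if i + 1 ≤ j then a * β ^ (j - (i + 1) + 1) else 0) * u j :=
    summable_mul_lp (hasSum_ite_le_mul_pow hβ0 hβ1 a (i + 1)).summable.abs u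
  simp only [toeplitzOp, lpInftyMatrixCLM_apply, toeplitzKernel, add_mul,
    Nat.add_right_cancel_iff]
  rw [hsub.tsum_add htail]
  simp [ite_mul, add_mul]

theorem norm_toeplitzOp_le : ‖toeplitzOp hβ0 hβ1 ha hKb‖ ≤ Kb + a / (1 - β) :=
  norm_lpInftyMatrixCLM_le _ _

theorem toeplitzOp_pow_apply_nonneg (n : ℕ) {u : lp (fun _ : ℕ => ℝ) ∞} (hu : ∀ j, 0 ≤ u j)
    (j : ℕ) : 0 ≤ (toeplitzOp hβ0 hβ1 ha hKb ^ n) u j := by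
  induction n generalizing j with
  | zero => exact hu j
  | succ n ih =>
    rw [pow_succ', mul_apply_eq_comp]
    exact lpInftyMatrixCLM_apply_nonneg _ _ (toeplitzKernel_nonneg hβ0 ha hKb) ih j

theorem pow_le_toeplitzOp_pow_apply_one (n : ℕ) {j : ℕ} (hj : n ≤ j) :
    (Kb + a / (1 - β)) ^ n ≤ (toeplitzOp hβ0 hβ1 ha hKb ^ n) 1 j := by
  induction n generalizing j with
  | zero => simp
  | succ n ih =>
    obtain ⟨i, rfl⟩ : ∃ i, j = i + 1 := ⟨j - 1, by omega⟩
    rw [pow_succ' (toeplitzOp hβ0 hβ1 ha hKb), mul_apply_eq_comp, pow_succ']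
    refine mul_le_lpInftyMatrixCLM_apply _ _ (toeplitzKernel_nonneg hβ0 ha hKb _)
      (hasSum_toeplitzKernel_succ hβ0 hβ1 i) fun k hk => ih ?_
    by_contra! hkn
    exact hk (toeplitzKernel_eq_zero_of_add_one_lt (by omega))

end Toeplitz

section SpectralRadius

variable {β a Kb : ℝ} (hβ0 : 0 ≤ β) (hβ1 : β < 1) (ha : 0 ≤ a) (hKb : 0 ≤ Kb)

theorem inv_sub_le_norm_resolvent_toeplitzOp {s : ℝ} (hs : Kb + a / (1 - β) < s) :
    (s - (Kb + a / (1 - β)))⁻¹ ≤ ‖resolvent (toeplitzOp hβ0 hβ1 ha hKb) s‖ := by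
  set T := toeplitzOp hβ0 hβ1 ha hKb
  set r := Kb + a / (1 - β)
  have hr : 0 ≤ r := by have := sub_pos.mpr hβ1; positivity
  have hs0 : 0 < s := hr.trans_lt hs
  have hTs : ‖T‖ < ‖s‖ := by
    rw [Real.norm_of_nonneg hs0.le]
    exact (norm_toeplitzOp_le ..).trans_lt hs
  have hcoord (i : ℕ) : HasSum (fun n => s⁻¹ ^ (n + 1) * (T ^ n) 1 i) (resolvent T s 1 i) := by
    have h := lp.hasSum_apply (E := fun _ : ℕ => ℝ) (p := ∞)
      ((ContinuousLinearMap.apply ℝ _ (1 : lp (fun _ : ℕ => ℝ) ∞)).hasSum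
        (spectrum.hasSum_resolvent hTs)) i
    simpa only [ContinuousLinearMap.apply_apply, smul_apply, lp.coeFn_smul,
      Pi.smul_apply, smul_eq_mul] using h
  have hscalar : HasSum (fun n => s⁻¹ ^ (n + 1) * r ^ n) (s - r)⁻¹ := by
    simpa [resolvent, Ring.inverse_eq_inv'] using spectrum.hasSum_resolvent (𝕜 := ℝ) (a := r)
      (s := s) (by rwa [Real.norm_of_nonneg hr, Real.norm_of_nonneg hs0.le])
  rw [← hscalar.tsum_eq]
  refine Real.tsum_le_of_sum_range_le (fun n => by positivity) fun i => ?_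
  calc ∑ n ∈ Finset.range i, s⁻¹ ^ (n + 1) * r ^ n
      ≤ ∑ n ∈ Finset.range i, s⁻¹ ^ (n + 1) * (T ^ n) 1 i :=
        Finset.sum_le_sum fun n hn => mul_le_mul_of_nonneg_left
          (pow_le_toeplitzOp_pow_apply_one hβ0 hβ1 ha hKb n (Finset.mem_range.mp hn).le)
          (by positivity)
    _ ≤ resolvent T s 1 i := sum_le_hasSum _ (fun n _ => mul_nonneg (by positivity)
          (toeplitzOp_pow_apply_nonneg hβ0 hβ1 ha hKb n (fun j => by simp) i)) (hcoord i)
    _ ≤ ‖resolvent T s 1‖ :=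
        (Real.le_norm_self _).trans (lp.norm_apply_le_norm ENNReal.top_ne_zero _ i)
    _ ≤ ‖resolvent T s‖ := by simpa using (resolvent T s).le_opNorm 1

theorem mem_spectrum_toeplitzOp :
    Kb + a / (1 - β) ∈ spectrum ℝ (toeplitzOp hβ0 hβ1 ha hKb) :=
  spectrum.mem_of_tendsto_norm_resolvent (l := 𝓝[>] _) nhdsWithin_le_nhds <|
    tendsto_atTop_mono' _ (eventually_nhdsWithin_of_forall fun _ hs =>
      inv_sub_le_norm_resolvent_toeplitzOp hβ0 hβ1 ha hKb hs) (tendsto_inv_sub_nhdsGT _)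

theorem spectralRadius_toeplitzOp :
    spectralRadius ℝ (toeplitzOp hβ0 hβ1 ha hKb) = ENNReal.ofReal (Kb + a / (1 - β)) := by
  have hr : 0 ≤ Kb + a / (1 - β) := by have := sub_pos.mpr hβ1; positivity
  have : Nontrivial (lp (fun _ : ℕ => ℝ) ∞) := NormOneClass.nontrivial
  refine le_antisymm ?_ ?_
  · calc spectralRadius ℝ (toeplitzOp hβ0 hβ1 ha hKb)
        ≤ ‖toeplitzOp hβ0 hβ1 ha hKb‖₊ := spectrum.spectralRadius_le_nnnorm _
      _ ≤ ENNReal.ofReal (Kb + a / (1 - β)) := by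
        rw [← ENNReal.ofReal_coe_nnreal, coe_nnnorm]
        exact ENNReal.ofReal_le_ofReal (norm_toeplitzOp_le ..)
  · rw [← Real.enorm_eq_ofReal hr]
    exact le_biSup _ (mem_spectrum_toeplitzOp hβ0 hβ1 ha hKb)

end SpectralRadius

/-- The one-sided infinite Toeplitz operator `𝒜` on `ℓ∞` (with `(𝒜u)₁ = Σ_{j≥1} a β^j u_j`
and `(𝒜u)_i = (K̄ + a) u_{i-1} + Σ_{j≥i} a β^{j-i+1} u_j` for `i ≥ 2`, here written with
0-based indices) is a well-defined bounded linear operator whose spectral radius equals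
`K̄ + a / (1 - β)`. -/
theorem stmt13 (β a Kb : ℝ) (hβ0 : 0 < β) (hβ1 : β < 1) (ha : 0 < a) (hKb : 0 < Kb) :
    ∃ 𝒜 : lp (fun _ : ℕ => ℝ) ⊤ →L[ℝ] lp (fun _ : ℕ => ℝ) ⊤,
      (∀ u : lp (fun _ : ℕ => ℝ) ⊤,
        (𝒜 u : ∀ _ : ℕ, ℝ) 0 = ∑' j : ℕ, a * β ^ (j + 1) * (u : ∀ _ : ℕ, ℝ) j ∧
        ∀ i : ℕ, 1 ≤ i →
          (𝒜 u : ∀ _ : ℕ, ℝ) i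
            = (Kb + a) * (u : ∀ _ : ℕ, ℝ) (i - 1)
              + ∑' j : ℕ,
                  (if i ≤ j then a * β ^ (j - i + 1) * (u : ∀ _ : ℕ, ℝ) j else 0)) ∧
      spectralRadius ℝ 𝒜 = ENNReal.ofReal (Kb + a / (1 - β)) := by
  refine ⟨toeplitzOp hβ0.le hβ1 ha.le hKb.le,
    fun u => ⟨toeplitzOp_apply_zero .., fun i hi => ?_⟩, spectralRadius_toeplitzOp ..⟩
  obtain ⟨i, rfl⟩ : ∃ k, i = k + 1 := ⟨i - 1, by omega⟩
  simpa using toeplitzOp_apply_succ hβ0.le hβ1 ha.le hKb.le u i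
end

section
/- Let X and A be compact metric spaces with A nonempty. Let (Q_n) be a sequence of continuous real-valued functions on X × A that is uniformly bounded, and let Q : X × A → ℝ be such that Q_n converges to Q continuously, i.e. for every sequence (x_n, a_n) in X × A converging to (x, a) one has Q_n(x_n, a_n) → Q(x, a). For each n let ν_n be a Borel probability measure on X × A with ν_n(A_n) = 1, where A_n = {(x, a) : Q_n(x, a) = min_{b ∈ A} Q_n(x, b)}. If ν_n converges weakly to a Borel probability measure ν on X × A, then ν(A∞) = 1, where A∞ = {(x, a) : Q(x, a) = min_{b ∈ A} Q(x, b)}. -/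
/-!
Continuous convergence on a compact space forces the limit `Q` to be continuous and the
convergence to be uniform. Once `|Q_n - Q| ≤ ε` everywhere, every minimizer of `Q_n(x, ·)` is a
`2ε`-minimizer of `Q(x, ·)`, so for each `δ > 0` the measures `ν_n` eventually charge only the
closed set where the optimality gap of `Q` is at most `δ`. By the portmanteau theorem `ν` gives
that set full mass too, and intersecting over `δ = 1/(k+1)` leaves the set where the gap vanishes.
-/

open Filter MeasureTheory Topology Set

def TendstoContinuously {Y Z : Type*} [TopologicalSpace Y] [TopologicalSpace Z]
    (F : ℕ → Y → Z) (f : Y → Z) : Prop :=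
  ∀ (y : ℕ → Y) (q : Y), Tendsto y atTop (𝓝 q) → Tendsto (fun n => F n (y n)) atTop (𝓝 (f q))

namespace TendstoContinuously

variable {Y Z : Type*} [TopologicalSpace Y] {F : ℕ → Y → Z} {f : Y → Z}

lemma comp_strictMono [TopologicalSpace Z] (h : TendstoContinuously F f) {φ : ℕ → ℕ}
    (hφ : StrictMono φ) {y : ℕ → Y} {q : Y} (hy : Tendsto y atTop (𝓝 q)) :
    Tendsto (fun k => F (φ k) (y k)) atTop (𝓝 (f q)) := by
  classical
  -- Spread `y` along `φ` and fill the gaps with the limit `q`.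
  let z : ℕ → Y := fun j => if j ∈ range φ then y (Function.invFun φ j) else q
  have hzφ : ∀ k, z (φ k) = y k := fun k => by
    simp [z, Function.leftInverse_invFun hφ.injective k]
  have hz : Tendsto z atTop (𝓝 q) := by
    rw [tendsto_atTop_nhds]
    intro U hqU hU
    obtain ⟨K, hK⟩ := tendsto_atTop_nhds.mp hy U hqU hU
    refine ⟨φ K, fun j hj => ?_⟩
    by_cases hjφ : j ∈ range φ
    · obtain ⟨k, rfl⟩ := hjφ
      exact hzφ k ▸ hK k (hφ.le_iff_le.mp hj)
    · simpa only [z, if_neg hjφ] using hqU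
  simpa only [Function.comp_def, hzφ] using (h z q hz).comp hφ.tendsto_atTop

lemma continuous [SequentialSpace Y] [PseudoMetricSpace Z] (h : TendstoContinuously F f) :
    Continuous f := by
  refine SeqContinuous.continuous fun y q hy => ?_
  have hclose : ∀ k : ℕ, ∀ᶠ n in atTop, dist (F n (y k)) (f (y k)) < 1 / (k + 1) := fun k =>
    (tendsto_iff_dist_tendsto_zero.mp (h _ _ tendsto_const_nhds)).eventually
      (gt_mem_nhds Nat.one_div_pos_of_nat)
  obtain ⟨φ, hφ, hφclose⟩ := extraction_forall_of_eventually hclose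
  refine (h.comp_strictMono hφ hy).congr_dist ?_
  exact squeeze_zero (fun _ => dist_nonneg) (fun k => (hφclose k).le)
    tendsto_one_div_add_atTop_nhds_zero_nat

lemma tendstoUniformly {Y Z : Type*} [PseudoMetricSpace Y] [CompactSpace Y]
    [PseudoMetricSpace Z] {F : ℕ → Y → Z} {f : Y → Z} (h : TendstoContinuously F f) :
    TendstoUniformly F f atTop := by
  rw [Metric.tendstoUniformly_iff]
  intro ε hε
  by_contra hfar
  simp only [not_eventually, not_forall, not_lt] at hfar
  obtain ⟨φ, hφ, hφfar⟩ := extraction_of_frequently_atTop hfar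
  choose y hy using hφfar
  obtain ⟨q, ψ, hψ, hyψ⟩ := CompactSpace.tendsto_subseq y
  have hF : Tendsto (fun k => F (φ (ψ k)) (y (ψ k))) atTop (𝓝 (f q)) :=
    h.comp_strictMono (hφ.comp hψ) hyψ
  have hf : Tendsto (fun k => f (y (ψ k))) atTop (𝓝 (f q)) :=
    (h.continuous.tendsto q).comp hyψ
  have hdist := hf.dist hF
  rw [dist_self] at hdist
  exact (hdist.eventually (gt_mem_nhds hε)).exists.elim fun k hk => (hy (ψ k)).not_gt hk

end TendstoContinuously

section OptimalityGap

variable {X A : Type*} [TopologicalSpace X] [TopologicalSpace A] [CompactSpace A]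

noncomputable def optimalityGap (F : X × A → ℝ) (p : X × A) : ℝ :=
  F p - ⨅ b, F (p.1, b)

variable {F G : X × A → ℝ}

lemma bddBelow_range_slice (hF : Continuous F) (x : X) :
    BddBelow (range fun b => F (x, b)) :=
  (isCompact_range (by fun_prop)).bddBelow

lemma continuous_iInf_slice (hF : Continuous F) : Continuous fun x => ⨅ b, F (x, b) := by
  simpa only [image_univ, sInf_range] using
    isCompact_univ.continuous_sInf (f := fun x b => F (x, b)) hF

lemma Continuous.optimalityGap (hF : Continuous F) : Continuous (optimalityGap F) :=
  hF.sub ((continuous_iInf_slice hF).comp continuous_fst)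

lemma optimalityGap_nonpos_iff (hF : Continuous F) {p : X × A} :
    optimalityGap F p ≤ 0 ↔ F p = ⨅ b, F (p.1, b) := by
  rw [optimalityGap, sub_nonpos]
  exact ⟨fun h => h.antisymm (ciInf_le (bddBelow_range_slice hF p.1) p.2), Eq.le⟩

lemma optimalityGap_le_of_dist_le (hG : Continuous G) {ε : ℝ} (hFG : ∀ p, dist (F p) (G p) ≤ ε)
    {p : X × A} (hp : F p = ⨅ b, F (p.1, b)) : optimalityGap G p ≤ 2 * ε := by
  have : Nonempty A := ⟨p.2⟩
  have hclose : ∀ q, |F q - G q| ≤ ε := hFG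
  have hF_bdd : BddBelow (range fun b => F (p.1, b)) := by
    obtain ⟨m, hm⟩ := bddBelow_range_slice hG p.1
    refine ⟨m - ε, forall_mem_range.mpr fun b => ?_⟩
    linarith [hm (mem_range_self b), abs_le.mp (hclose (p.1, b))]
  have hGp : G p - 2 * ε ≤ ⨅ b, G (p.1, b) := le_ciInf fun b => by
    linarith [ciInf_le hF_bdd b, abs_le.mp (hclose p), abs_le.mp (hclose (p.1, b))]
  rw [optimalityGap]
  linarith

end OptimalityGap

lemma ProbabilityMeasure.measure_eq_one_of_tendsto_of_isClosed {Ω ι : Type*} {L : Filter ι}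
    [L.NeBot] [MeasurableSpace Ω] [TopologicalSpace Ω] [OpensMeasurableSpace Ω]
    [HasOuterApproxClosed Ω] {μ : ProbabilityMeasure Ω} {μs : ι → ProbabilityMeasure Ω}
    (hμs : Tendsto μs L (𝓝 μ)) {s : Set Ω} (hs : IsClosed s)
    (h : ∀ᶠ i in L, (μs i : Measure Ω) s = 1) : (μ : Measure Ω) s = 1 := by
  refine prob_le_one.antisymm ?_
  calc 1 = L.limsup fun i => (μs i : Measure Ω) s :=
        ((limsup_congr h).trans (limsup_const 1)).symm
    _ ≤ (μ : Measure Ω) s := ProbabilityMeasure.limsup_measure_closed_le_of_tendsto hμs hs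

theorem stmt14_general {X A : Type*} [MetricSpace X] [CompactSpace X]
    [MetricSpace A] [CompactSpace A]
    [MeasurableSpace (X × A)] [OpensMeasurableSpace (X × A)]
    (Q : ℕ → X × A → ℝ) (Qlim : X × A → ℝ)
    (hcc : ∀ (p : ℕ → X × A) (q : X × A), Tendsto p atTop (nhds q) →
      Tendsto (fun n => Q n (p n)) atTop (nhds (Qlim q)))
    (ν : ℕ → ProbabilityMeasure (X × A)) (νlim : ProbabilityMeasure (X × A))
    (hν : ∀ n, (ν n : Measure (X × A)) {p | Q n p = ⨅ b : A, Q n (p.1, b)} = 1)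
    (hw : Tendsto ν atTop (nhds νlim)) :
    (νlim : Measure (X × A)) {p | Qlim p = ⨅ b : A, Qlim (p.1, b)} = 1 := by
  have hQ : TendstoContinuously Q Qlim := hcc
  have hQlim : Continuous Qlim := hQ.continuous
  have hclosed (δ : ℝ) : IsClosed {p | optimalityGap Qlim p ≤ δ} :=
    isClosed_le hQlim.optimalityGap continuous_const
  have hnear (δ : ℝ) (hδ : 0 < δ) :
      (νlim : Measure (X × A)) {p | optimalityGap Qlim p ≤ δ} = 1 := by
    refine ProbabilityMeasure.measure_eq_one_of_tendsto_of_isClosed hw (hclosed δ) ?_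
    filter_upwards [Metric.tendstoUniformly_iff.mp hQ.tendstoUniformly (δ / 2) (half_pos hδ)]
      with n hn
    refine prob_le_one.antisymm (hν n ▸ measure_mono fun p hp => ?_)
    have hclose (p : X × A) : dist (Q n p) (Qlim p) ≤ δ / 2 := by
      rw [dist_comm]; exact (hn p).le
    exact (optimalityGap_le_of_dist_le hQlim hclose hp).trans (by linarith)
  have hopt : {p | Qlim p = ⨅ b, Qlim (p.1, b)} = {p | optimalityGap Qlim p ≤ 0} :=
    ext fun _ => (optimalityGap_nonpos_iff hQlim).symm
  rw [hopt, ← mem_ae_iff_prob_eq_one (hclosed 0).measurableSet]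
  have hae : ∀ᵐ p ∂(νlim : Measure (X × A)), ∀ k : ℕ, optimalityGap Qlim p ≤ 1 / (k + 1) :=
    ae_all_iff.mpr fun k => (mem_ae_iff_prob_eq_one (hclosed _).measurableSet).mpr
      (hnear _ Nat.one_div_pos_of_nat)
  filter_upwards [hae] with p hp using ge_of_tendsto' tendsto_one_div_add_atTop_nhds_zero_nat hp

/-- Weak limits of probability measures concentrated on the optimal state-action pairs of
continuously convergent functions `Q_n` are concentrated on the optimal state-action
pairs of the limit function (Lemma 4.3). -/
theorem stmt14 {X A : Type*} [MetricSpace X] [CompactSpace X]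
    [MetricSpace A] [CompactSpace A] [Nonempty A]
    [MeasurableSpace (X × A)] [OpensMeasurableSpace (X × A)]
    (Q : ℕ → X × A → ℝ) (Qlim : X × A → ℝ)
    (hQcont : ∀ n, Continuous (Q n))
    (hbdd : ∃ M : ℝ, ∀ n p, |Q n p| ≤ M)
    (hcc : ∀ (p : ℕ → X × A) (q : X × A), Tendsto p atTop (nhds q) →
      Tendsto (fun n => Q n (p n)) atTop (nhds (Qlim q)))
    (ν : ℕ → ProbabilityMeasure (X × A)) (νlim : ProbabilityMeasure (X × A))
    (hν : ∀ n, (ν n : Measure (X × A)) {p | Q n p = ⨅ b : A, Q n (p.1, b)} = 1)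
    (hw : Tendsto ν atTop (nhds νlim)) :
    (νlim : Measure (X × A)) {p | Qlim p = ⨅ b : A, Qlim (p.1, b)} = 1 :=
  stmt14_general Q Qlim hcc ν νlim hν hw
end
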